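/- arXiv:1112.2300 — 9 statements merged into one kernel-verified Lean document; each statement's English description precedes it below -/
import Mathlib

section
/- Let Γ be a diagram of finite type and let Ξ be a connected induced subdiagram of Γ with exactly three vertices. Then the underlying unoriented edge-weighted graph of Ξ is one of the following four graphs: a path whose two edges both have weight 1; a triangle all three of whose edges have weight 1; a path whose two edges have weights 1 and 2; or a triangle whose three edges have weights 1, 2 and 2. -/
namespace ClusterReflection

variable {n : ℕ}

/-- A square integer matrix `B` is skew-symmetrisable if `D * B` is skew-symmetric for some
diagonal matrix `D` with positive diagonal entries. -/
def IsSkewSymmetrizable (B : Matrix (Fin n) (Fin n) ℤ) : Prop :=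
  ∃ d : Fin n → ℤ, (∀ i, 0 < d i) ∧ ∀ i j, d i * B i j = -(d j * B j i)

/-- Fomin-Zelevinsky matrix mutation in direction `k`. -/
def mutate (k : Fin n) (B : Matrix (Fin n) (Fin n) ℤ) : Matrix (Fin n) (Fin n) ℤ :=
  Matrix.of fun i j =>
    if i = k ∨ j = k then -B i j
    else B i j + (|B i k| * B k j + B i k * |B k j|) / 2

/-- One-step mutation relation. -/
def Mutation (X Y : Matrix (Fin n) (Fin n) ℤ) : Prop := ∃ k, Y = mutate k X

/-- `B` is of finite type (2-finite) if every matrix obtained from it by a finite sequence of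
mutations has `|B'_{ij} B'_{ji}| ≤ 3` for all `i, j`. -/
def IsFiniteType (B : Matrix (Fin n) (Fin n) ℤ) : Prop :=
  ∀ B', Relation.ReflTransGen Mutation B B' → ∀ i j, |B' i j * B' j i| ≤ 3

/-! ### Auxiliary 3×3 model -/

/-- State: `(B i j, B j i, B j k, B k j, B i k, B k i)`. -/
abbrev St := ℤ × ℤ × ℤ × ℤ × ℤ × ℤ

/-- Mutation of the 3×3 restriction, at vertex `0 = i`, `1 = j`, `2 = k`. -/
def step (t : Fin 3) (s : St) : St :=
  match s with
  | (a, b, c, d, e, f) =>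
    if t = 0 then
      (-a, -b, c + (|b| * e + b * |e|) / 2, d + (|f| * a + f * |a|) / 2, -e, -f)
    else if t = 1 then
      (-a, -b, -c, -d, e + (|a| * c + a * |c|) / 2, f + (|d| * b + d * |b|) / 2)
    else
      (a + (|e| * d + e * |d|) / 2, b + (|c| * f + c * |f|) / 2, -c, -d, -e, -f)

def run (w : List (Fin 3)) (s : St) : St := w.foldl (fun s t => step t s) s

def weightsOK (s : St) : Prop :=
  |s.1 * s.2.1| ≤ 3 ∧ |s.2.2.1 * s.2.2.2.1| ≤ 3 ∧ |s.2.2.2.2.1 * s.2.2.2.2.2| ≤ 3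

def Good (s : St) : Prop :=
  ({|s.1 * s.2.1|, |s.2.2.1 * s.2.2.2.1|, |s.2.2.2.2.1 * s.2.2.2.2.2|} : Multiset ℤ) = {1, 1, 0} ∨
  ({|s.1 * s.2.1|, |s.2.2.1 * s.2.2.2.1|, |s.2.2.2.2.1 * s.2.2.2.2.2|} : Multiset ℤ) = {1, 1, 1} ∨
  ({|s.1 * s.2.1|, |s.2.2.1 * s.2.2.2.1|, |s.2.2.2.2.1 * s.2.2.2.2.2|} : Multiset ℤ) = {1, 2, 0} ∨
  ({|s.1 * s.2.1|, |s.2.2.1 * s.2.2.2.1|, |s.2.2.2.2.1 * s.2.2.2.2.2|} : Multiset ℤ) = {1, 2, 2}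

def Pairs : List (ℤ × ℤ) :=
  [(0,0),(1,-1),(-1,1),(1,-2),(2,-1),(-1,2),(-2,1),(1,-3),(3,-1),(-1,3),(-3,1)]

def Words : List (List (Fin 3)) :=
  [[0], [0,1], [0,1,0], [0,1,2], [0,2], [0,2,0], [0,2,1],
   [1], [1,0], [1,0,1], [1,0,2], [1,2], [2], [2,0], [2,1]]

instance : DecidablePred weightsOK := fun s => by unfold weightsOK; infer_instance
instance : DecidablePred Good := fun s => by unfold Good; infer_instance

lemma pair_mem {a b : ℤ} (h1 : a * b ≤ 0) (h0 : a = 0 ↔ b = 0) (h3 : |a * b| ≤ 3) :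
    (a, b) ∈ Pairs := by
  have hab : |a| * |b| ≤ 3 := by rwa [abs_mul] at h3
  have ha : |a| ≤ 3 := by
    rcases eq_or_ne b 0 with hb | hb
    · simp [h0.mpr hb]
    · have h1b : 1 ≤ |b| := Int.one_le_abs (by omega)
      nlinarith [abs_nonneg a]
  have hb : |b| ≤ 3 := by
    rcases eq_or_ne a 0 with haz | haz
    · simp [h0.mp haz]
    · have h1a : 1 ≤ |a| := Int.one_le_abs (by omega)
      nlinarith [abs_nonneg b]
  obtain ⟨ha1, ha2⟩ := abs_le.mp ha
  obtain ⟨hb1, hb2⟩ := abs_le.mp hb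
  interval_cases a <;> interval_cases b <;> revert h1 h0 h3 <;> decide

/-- The finite verification at the heart of the lemma. -/
lemma core : ∀ p ∈ Pairs, ∀ q ∈ Pairs, ∀ r ∈ Pairs,
    p.1 * q.1 * r.2 = -(p.2 * q.2 * r.1) →
    ((p.1 ≠ 0 ∧ q.1 ≠ 0) ∨ (p.1 ≠ 0 ∧ r.1 ≠ 0) ∨ (q.1 ≠ 0 ∧ r.1 ≠ 0)) →
    (∀ w ∈ Words, weightsOK (run w (p.1, p.2, q.1, q.2, r.1, r.2))) →
    Good (p.1, p.2, q.1, q.2, r.1, r.2) := by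
  decide

lemma skew_sign {B : Matrix (Fin n) (Fin n) ℤ} {d : Fin n → ℤ} (hd : ∀ i, 0 < d i)
    (hm : ∀ i j, d i * B i j = -(d j * B j i)) (x y : Fin n) :
    B x y * B y x ≤ 0 ∧ (B x y = 0 ↔ B y x = 0) := by
  have h := hm x y
  have hx := hd x
  have hy := hd y
  have key : d x * d y * (B x y * B y x) = -(d y * B y x) ^ 2 := by
    linear_combination (d y * B y x) * h
  refine ⟨by nlinarith [mul_pos hx hy, sq_nonneg (d y * B y x)], ?_, ?_⟩
  · intro h0
    have : d y * B y x = 0 := by rw [h0, mul_zero] at h; linarith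
    rcases mul_eq_zero.mp this with h' | h'
    · exact absurd h' hy.ne'
    · exact h'
  · intro h0
    have : d x * B x y = 0 := by rw [h0, mul_zero, neg_zero] at h; exact h
    rcases mul_eq_zero.mp this with h' | h'
    · exact absurd h' hx.ne'
    · exact h'

lemma state_mutate (B : Matrix (Fin n) (Fin n) ℤ) {i j k : Fin n}
    (hij : i ≠ j) (hjk : j ≠ k) (hik : i ≠ k) (t : Fin 3) :
    (mutate (![i, j, k] t) B i j, mutate (![i, j, k] t) B j i, mutate (![i, j, k] t) B j k,
      mutate (![i, j, k] t) B k j, mutate (![i, j, k] t) B i k, mutate (![i, j, k] t) B k i)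
    = step t (B i j, B j i, B j k, B k j, B i k, B k i) := by
  fin_cases t <;>
    simp [mutate, step, hij, hjk, hik, hij.symm, hjk.symm, hik.symm, Ne.symm hij,
      Ne.symm hjk, Ne.symm hik]

lemma run_reaches (B : Matrix (Fin n) (Fin n) ℤ) {i j k : Fin n}
    (hij : i ≠ j) (hjk : j ≠ k) (hik : i ≠ k) :
    ∀ w : List (Fin 3), ∃ B', Relation.ReflTransGen Mutation B B' ∧
      (B' i j, B' j i, B' j k, B' k j, B' i k, B' k i)
        = run w (B i j, B j i, B j k, B k j, B i k, B k i) := by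
  intro w
  induction w generalizing B with
  | nil => exact ⟨B, Relation.ReflTransGen.refl, rfl⟩
  | cons t w ih =>
    obtain ⟨B', hB', hst⟩ := ih (mutate (![i, j, k] t) B)
    refine ⟨B', Relation.ReflTransGen.head ⟨![i, j, k] t, rfl⟩ hB', ?_⟩
    rw [hst, state_mutate B hij hjk hik t]
    rfl

/-- Lemma 2.2. -/
theorem three_vertex_connected_subdiagrams
    (B : Matrix (Fin n) (Fin n) ℤ)
    (hskew : IsSkewSymmetrizable B) (hft : IsFiniteType B)
    (i j k : Fin n) (hij : i ≠ j) (hjk : j ≠ k) (hik : i ≠ k)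
    (hconn : (B i j ≠ 0 ∧ B j k ≠ 0) ∨ (B i j ≠ 0 ∧ B i k ≠ 0) ∨ (B j k ≠ 0 ∧ B i k ≠ 0)) :
    ({|B i j * B j i|, |B j k * B k j|, |B i k * B k i|} : Multiset ℤ) = {1, 1, 0} ∨
    ({|B i j * B j i|, |B j k * B k j|, |B i k * B k i|} : Multiset ℤ) = {1, 1, 1} ∨
    ({|B i j * B j i|, |B j k * B k j|, |B i k * B k i|} : Multiset ℤ) = {1, 2, 0} ∨
    ({|B i j * B j i|, |B j k * B k j|, |B i k * B k i|} : Multiset ℤ) = {1, 2, 2} := by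
  obtain ⟨d, hd, hm⟩ := hskew
  have hbase := hft B Relation.ReflTransGen.refl
  have m1 : ((B i j, B j i) : ℤ × ℤ) ∈ Pairs :=
    pair_mem (skew_sign hd hm i j).1 (skew_sign hd hm i j).2 (hbase i j)
  have m2 : ((B j k, B k j) : ℤ × ℤ) ∈ Pairs :=
    pair_mem (skew_sign hd hm j k).1 (skew_sign hd hm j k).2 (hbase j k)
  have m3 : ((B i k, B k i) : ℤ × ℤ) ∈ Pairs :=
    pair_mem (skew_sign hd hm i k).1 (skew_sign hd hm i k).2 (hbase i k)
  have htri : B i j * B j k * B k i = -(B j i * B k j * B i k) := by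
    have h1 := hm i j
    have h2 := hm j k
    have h3 := hm k i
    have hpos : (0 : ℤ) < d i * d j * d k := mul_pos (mul_pos (hd i) (hd j)) (hd k)
    refine mul_left_cancel₀ hpos.ne' ?_
    linear_combination (d j * B j k * (d k * B k i)) * h1 -
      (d j * B j i * (d k * B k i)) * h2 + (d j * d k * B j i * B k j) * h3
  have hcheck : ∀ w ∈ Words,
      weightsOK (run w (B i j, B j i, B j k, B k j, B i k, B k i)) := by
    intro w _
    obtain ⟨B', hB', hst⟩ := run_reaches B hij hjk hik w
    rw [← hst]
    exact ⟨hft B' hB' i j, hft B' hB' j k, hft B' hB' i k⟩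
  have hGood := core (B i j, B j i) m1 (B j k, B k j) m2 (B i k, B k i) m3 htri hconn hcheck
  simpa [Good] using hGood

end ClusterReflection
end

section
/- Let Γ be a diagram of finite type, let C be a chordless cycle in Γ, and let k be a vertex of Γ not lying on C which is connected by an edge to at least one vertex of C. Then k is connected to at most two vertices of C, and if it is connected to exactly two vertices of C, those two vertices are adjacent in C. -/
namespace ClusterReflection

variable {n : ℕ}

/-- The Coxeter exponent `m i j` attached to a pair of vertices of the diagram of `B`:
`2` if there is no edge, and `3`, `4`, `6` for an edge of weight `1`, `2`, `3`. -/
def coxm (B : Matrix (Fin n) (Fin n) ℤ) (i j : Fin n) : ℕ :=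
  if B i j * B j i = 0 then 2
  else if |B i j * B j i| = 1 then 3
  else if |B i j * B j i| = 2 then 4
  else 6

/-- Relations (R1). -/
def R1 {W : Type*} [Group W] (s : Fin n → W) : Prop := ∀ i, s i ^ 2 = 1

/-- Relations (R2). -/
def R2 {W : Type*} [Group W] (B : Matrix (Fin n) (Fin n) ℤ) (s : Fin n → W) : Prop :=
  ∀ i j, i ≠ j → (s i * s j) ^ coxm B i j = 1

/-- `v : ZMod d → Fin n` lists the vertices of an (oriented) chordless cycle
`v 0 → v 1 → ⋯ → v (d-1) → v 0` of the diagram of `B`. -/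
def IsChordlessCycle (B : Matrix (Fin n) (Fin n) ℤ) {d : ℕ} (v : ZMod d → Fin n) : Prop :=
  Function.Injective v ∧ (∀ a : ZMod d, 0 < B (v a) (v (a + 1))) ∧
    ∀ a b : ZMod d, a ≠ b → b ≠ a + 1 → a ≠ b + 1 → B (v a) (v b) = 0

/-- The element `r(i_a, i_{a+1}) = s_{i_a} s_{i_{a+1}} ⋯ s_{i_{a+d-1}} s_{i_{a+d-2}} ⋯ s_{i_{a+1}}`
attached to a chordless cycle `v` and a starting vertex `a`. -/
def cycleWord {W : Type*} [Group W] (s : Fin n → W) {d : ℕ} (v : ZMod d → Fin n)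
    (a : ZMod d) : W :=
  (((List.range d).map fun t => s (v (a + (t : ZMod d)))).prod) *
    (((List.range (d - 2)).map fun t => s (v (a + ((d - 2 - t : ℕ) : ZMod d)))).prod)

open scoped Classical in
/-- The exponent in relation (R3): `2` if all the weights of the cycle are `1`, and otherwise
`4 - w_a`, where `w_a` is the weight of the edge of the cycle between `v (a-1)` and `v a`. -/
noncomputable def cycleExp (B : Matrix (Fin n) (Fin n) ℤ) {d : ℕ} (v : ZMod d → Fin n)
    (a : ZMod d) : ℕ :=
  if ∀ b : ZMod d, |B (v b) (v (b + 1)) * B (v (b + 1)) (v b)| = 1 then 2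
  else 4 - (|B (v (a - 1)) (v a) * B (v a) (v (a - 1))|).toNat

/-- Relations (R3). -/
def R3 {W : Type*} [Group W] (B : Matrix (Fin n) (Fin n) ℤ) (s : Fin n → W) : Prop :=
  ∀ d : ℕ, 3 ≤ d → ∀ v : ZMod d → Fin n, IsChordlessCycle B v →
    ∀ a : ZMod d, cycleWord s v a ^ cycleExp B v a = 1

/-- The set of relators (R1), (R2), (R3) in the free group on the vertices. -/
def diagramRels (B : Matrix (Fin n) (Fin n) ℤ) : Set (FreeGroup (Fin n)) :=
  {w | (∃ i, w = FreeGroup.of i ^ 2) ∨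
       (∃ i j, i ≠ j ∧ w = (FreeGroup.of i * FreeGroup.of j) ^ coxm B i j) ∨
       (∃ d : ℕ, 3 ≤ d ∧ ∃ v : ZMod d → Fin n, IsChordlessCycle B v ∧
          ∃ a : ZMod d, w = cycleWord FreeGroup.of v a ^ cycleExp B v a)}

/-- The group `W_Γ` associated to the diagram of `B`. -/
abbrev DiagramGroup (B : Matrix (Fin n) (Fin n) ℤ) : Type := PresentedGroup (diagramRels B)

/-! ### auxiliary infrastructure -/

def fmut (x y : ℤ) : ℤ := (|x| * y + x * |y|) / 2

lemma fmut_pos {x y : ℤ} (hx : 0 < x) (hy : 0 < y) : fmut x y = x * y := by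
  unfold fmut
  rw [abs_of_pos hx, abs_of_pos hy, show x * y + x * y = x * y * 2 by ring]
  exact Int.mul_ediv_cancel _ two_ne_zero

lemma fmut_neg {x y : ℤ} (hx : x < 0) (hy : y < 0) : fmut x y = -(x * y) := by
  unfold fmut
  rw [abs_of_neg hx, abs_of_neg hy, show -x * y + x * -y = -(x * y) * 2 by ring]
  exact Int.mul_ediv_cancel _ two_ne_zero

lemma fmut_mix {x y : ℤ} (h : x * y ≤ 0) : fmut x y = 0 := by
  rcases le_or_gt x 0 with hx | hx
  · rcases le_or_gt 0 y with hy | hy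
    · unfold fmut
      rw [abs_of_nonpos hx, abs_of_nonneg hy, show -x * y + x * y = 0 by ring]
      simp
    · rcases lt_or_eq_of_le hx with hx' | hx'
      · nlinarith
      · subst hx'; unfold fmut; simp
  · have hy : y ≤ 0 := by nlinarith
    unfold fmut
    rw [abs_of_pos hx, abs_of_nonpos hy, show x * y + x * -y = 0 by ring]
    simp

lemma fmut_zero_left {y : ℤ} : fmut 0 y = 0 := by unfold fmut; simp

lemma fmut_zero_right {x : ℤ} : fmut x 0 = 0 := by unfold fmut; simp

lemma mutate_apply_ne (k : Fin n) (B : Matrix (Fin n) (Fin n) ℤ) {i j : Fin n}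
    (hi : i ≠ k) (hj : j ≠ k) : mutate k B i j = B i j + fmut (B i k) (B k j) := by
  unfold mutate fmut
  rw [Matrix.of_apply, if_neg]
  rintro (h | h) <;> [exact hi h; exact hj h]

lemma mutate_apply_left (k : Fin n) (B : Matrix (Fin n) (Fin n) ℤ) (j : Fin n) :
    mutate k B k j = -B k j := by
  unfold mutate; rw [Matrix.of_apply, if_pos (Or.inl rfl)]

lemma mutate_apply_right (k : Fin n) (B : Matrix (Fin n) (Fin n) ℤ) (i : Fin n) :
    mutate k B i k = -B i k := by
  unfold mutate; rw [Matrix.of_apply, if_pos (Or.inr rfl)]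

section skew

variable {B : Matrix (Fin n) (Fin n) ℤ}

lemma skew_diag (hs : IsSkewSymmetrizable B) (i : Fin n) : B i i = 0 := by
  obtain ⟨d, hd, h⟩ := hs
  have := h i i
  have hdi := hd i
  nlinarith

lemma skew_neg_of_pos (hs : IsSkewSymmetrizable B) {i j : Fin n} (h : 0 < B i j) :
    B j i < 0 := by
  obtain ⟨d, hd, hB⟩ := hs
  have := hB i j
  nlinarith [hd i, hd j]

lemma skew_pos_of_neg (hs : IsSkewSymmetrizable B) {i j : Fin n} (h : B i j < 0) :
    0 < B j i := by
  obtain ⟨d, hd, hB⟩ := hs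
  have := hB i j
  nlinarith [hd i, hd j]

lemma skew_zero (hs : IsSkewSymmetrizable B) {i j : Fin n} (h : B i j = 0) : B j i = 0 := by
  obtain ⟨d, hd, hB⟩ := hs
  have h2 := hB i j
  rw [h, mul_zero] at h2
  have hdj := hd j
  nlinarith

lemma skew_ne_zero (hs : IsSkewSymmetrizable B) {i j : Fin n} (h : B i j ≠ 0) : B j i ≠ 0 :=
  fun h0 => h (skew_zero hs h0)

lemma skew_mutate (hs : IsSkewSymmetrizable B) (k : Fin n) :
    IsSkewSymmetrizable (mutate k B) := by
  obtain ⟨d, hd, hB⟩ := hs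
  refine ⟨d, hd, fun i j => ?_⟩
  by_cases hi : i = k
  · subst hi
    rw [mutate_apply_left, mutate_apply_right]
    have := hB i j
    ring_nf
    linarith [hB i j]
  · by_cases hj : j = k
    · subst hj
      rw [mutate_apply_left, mutate_apply_right]
      linarith [hB i j]
    · rw [mutate_apply_ne k B hi hj, mutate_apply_ne k B hj hi]
      have h1 : d i * B i k = -(d k * B k i) := hB i k
      have h2 : d k * B k j = -(d j * B j k) := hB k j
      have key : d i * fmut (B i k) (B k j) = -(d j * fmut (B j k) (B k i)) := by
        rcases lt_trichotomy (B i k) 0 with hik | hik | hik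
        · have hki : 0 < B k i := by nlinarith [hd i, hd k]
          rcases lt_trichotomy (B k j) 0 with hkj | hkj | hkj
          · have hjk : 0 < B j k := by nlinarith [hd k, hd j]
            rw [fmut_neg hik hkj, fmut_pos hjk hki]
            calc d i * -(B i k * B k j) = -((d i * B i k) * B k j) := by ring
              _ = -(-(d k * B k i) * B k j) := by rw [h1]
              _ = B k i * (d k * B k j) := by ring
              _ = B k i * -(d j * B j k) := by rw [h2]
              _ = -(d j * (B j k * B k i)) := by ring
          · rw [hkj, fmut_zero_right]
            have hjk : B j k = 0 := by nlinarith [hd k, hd j]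
            rw [hjk, fmut_zero_left]; ring
          · have hjk : B j k < 0 := by nlinarith [hd k, hd j]
            rw [fmut_mix (by nlinarith), fmut_mix (by nlinarith)]; ring
        · rw [hik, fmut_zero_left]
          have hki : B k i = 0 := by nlinarith [hd i, hd k]
          rw [hki, fmut_zero_right]; ring
        · have hki : B k i < 0 := by nlinarith [hd i, hd k]
          rcases lt_trichotomy (B k j) 0 with hkj | hkj | hkj
          · have hjk : 0 < B j k := by nlinarith [hd k, hd j]
            rw [fmut_mix (by nlinarith), fmut_mix (by nlinarith)]; ring
          · rw [hkj, fmut_zero_right]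
            have hjk : B j k = 0 := by nlinarith [hd k, hd j]
            rw [hjk, fmut_zero_left]; ring
          · have hjk : B j k < 0 := by nlinarith [hd k, hd j]
            rw [fmut_pos hik hkj, fmut_neg hjk hki]
            calc d i * (B i k * B k j) = (d i * B i k) * B k j := by ring
              _ = -(d k * B k i) * B k j := by rw [h1]
              _ = -(B k i * (d k * B k j)) := by ring
              _ = -(B k i * -(d j * B j k)) := by rw [h2]
              _ = -(d j * -(B j k * B k i)) := by ring
      have h3 := hB i j
      linarith [key]

end skew

lemma ft_mutate {B : Matrix (Fin n) (Fin n) ℤ} (hft : IsFiniteType B) (k : Fin n) :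
    IsFiniteType (mutate k B) :=
  fun B' h i j => hft B' (Relation.ReflTransGen.head ⟨k, rfl⟩ h) i j

lemma badTriangle {B : Matrix (Fin n) (Fin n) ℤ} (hs : IsSkewSymmetrizable B)
    (hft : IsFiniteType B) {x z y : Fin n}
    (hxz : 0 < B x z) (hzy : 0 < B z y) (hxy : 0 < B x y) : False := by
  have hxz' : x ≠ z := fun h => by rw [h, skew_diag hs z] at hxz; exact lt_irrefl 0 hxz
  have hyz' : y ≠ z := fun h => by
    rw [h] at hzy; rw [skew_diag hs z] at hzy; exact lt_irrefl 0 hzy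
  have hzx : B z x < 0 := skew_neg_of_pos hs hxz
  have hyz : B y z < 0 := skew_neg_of_pos hs hzy
  have hyx : B y x < 0 := skew_neg_of_pos hs hxy
  have e1 : mutate z B x y = B x y + B x z * B z y := by
    rw [mutate_apply_ne z B hxz' hyz', fmut_pos hxz hzy]
  have e2 : mutate z B y x = B y x + -(B y z * B z x) := by
    rw [mutate_apply_ne z B hyz' hxz', fmut_neg hyz hzx]
  have hbound := hft (mutate z B) (Relation.ReflTransGen.single ⟨z, rfl⟩) x y
  have hxy2 : 2 ≤ mutate z B x y := by rw [e1]; nlinarith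
  have hyx2 : mutate z B y x ≤ -2 := by rw [e2]; nlinarith
  have hprod : mutate z B x y * mutate z B y x ≤ -4 := by nlinarith
  rw [abs_of_nonpos (by linarith)] at hbound
  linarith

/-! ### unoriented chordless cycles, ℕ-periodic encoding -/

lemma offset_cancel {m a u v : ℕ} (hu : u < m) (hv : v < m)
    (h : (a + u) % m = (a + v) % m) : u = v := by
  have h' : u ≡ v [MOD m] := Nat.ModEq.add_left_cancel' a h
  rwa [Nat.ModEq, Nat.mod_eq_of_lt hu, Nat.mod_eq_of_lt hv] at h'

lemma offset_exists {m : ℕ} (hm : 0 < m) (c i : ℕ) :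
    ∃ u, u < m ∧ (c + u) % m = i % m := by
  have hc : c % m < m := Nat.mod_lt _ hm
  have hi : i % m < m := Nat.mod_lt _ hm
  rcases le_or_gt (c % m) (i % m) with h | h
  · refine ⟨i % m - c % m, by omega, ?_⟩
    calc (c + (i % m - c % m)) % m = (c % m + (i % m - c % m) % m) % m := Nat.add_mod _ _ _
      _ = (c % m + (i % m - c % m)) % m := by
            rw [show (i % m - c % m) % m = i % m - c % m from Nat.mod_eq_of_lt (by omega)]
      _ = (i % m) % m := by congr 1; omega
      _ = i % m := Nat.mod_eq_of_lt hi
  · refine ⟨i % m + m - c % m, by omega, ?_⟩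
    calc (c + (i % m + m - c % m)) % m
        = (c % m + (i % m + m - c % m) % m) % m := Nat.add_mod _ _ _
      _ = (c % m + (i % m + m - c % m)) % m := by
            rw [show (i % m + m - c % m) % m = i % m + m - c % m from Nat.mod_eq_of_lt (by omega)]
      _ = (i % m + m) % m := by congr 1; omega
      _ = (i % m) % m := Nat.add_mod_right _ _
      _ = i % m := Nat.mod_eq_of_lt hi

structure UC (B : Matrix (Fin n) (Fin n) ℤ) (m : ℕ) (w : ℕ → Fin n) : Prop where
  per : ∀ i, w (i + m) = w i
  inj : ∀ p q, p < m → q < m → w p = w q → p = q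
  edge : ∀ i, B (w i) (w (i + 1)) ≠ 0
  chord : ∀ i t, 2 ≤ t → t + 2 ≤ m → B (w i) (w (i + t)) = 0

namespace UC

variable {B : Matrix (Fin n) (Fin n) ℤ} {m : ℕ} {w : ℕ → Fin n}

lemma w_add_mul (h : UC B m w) (i k : ℕ) : w (i + k * m) = w i := by
  induction k with
  | zero => simp
  | succ k ih => rw [Nat.succ_mul, ← Nat.add_assoc, h.per, ih]

lemma w_mod (h : UC B m w) (i : ℕ) : w i = w (i % m) := by
  have h2 := h.w_add_mul (i % m) (i / m)
  rwa [Nat.mod_add_div'] at h2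

lemma w_eq (h : UC B m w) {p q : ℕ} (hpq : p % m = q % m) : w p = w q := by
  rw [h.w_mod p, h.w_mod q, hpq]

lemma w_eq_iff (h : UC B m w) (hm : 0 < m) {p q : ℕ} : w p = w q ↔ p % m = q % m := by
  refine ⟨fun he => ?_, h.w_eq⟩
  exact h.inj _ _ (Nat.mod_lt _ hm) (Nat.mod_lt _ hm) (by rw [← h.w_mod, ← h.w_mod, he])

lemma w_ne_off (h : UC B m w) (hm : 0 < m) (a : ℕ) {u v : ℕ} (hu : u < m) (hv : v < m)
    (huv : u ≠ v) : w (a + u) ≠ w (a + v) :=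
  fun he => huv (offset_cancel hu hv ((h.w_eq_iff hm).mp he))

/-- Entries of the mutated matrix at pairs of cycle vertices other than the
"shortcut pair" are unchanged. Offsets are measured from `c+1` (the mutation vertex). -/
lemma mut_pair (h : UC B m w) (hm : 3 ≤ m) (c : ℕ) {u v : ℕ}
    (hu1 : 1 ≤ u) (hum : u ≤ m - 1) (hv1 : 1 ≤ v) (hvm : v ≤ m - 1) (huv : u ≠ v)
    (hs1 : ¬(u = m - 1 ∧ v = 1)) (hs2 : ¬(u = 1 ∧ v = m - 1)) :
    mutate (w (c + 1)) B (w (c + 1 + u)) (w (c + 1 + v)) = B (w (c + 1 + u)) (w (c + 1 + v)) := by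
  have hm0 : 0 < m := by omega
  have hne1 : w (c + 1 + u) ≠ w (c + 1) := by
    have := h.w_ne_off hm0 (c + 1) (u := u) (v := 0) (by omega) (by omega) (by omega)
    simpa using this
  have hne2 : w (c + 1 + v) ≠ w (c + 1) := by
    have := h.w_ne_off hm0 (c + 1) (u := v) (v := 0) (by omega) (by omega) (by omega)
    simpa using this
  rw [mutate_apply_ne _ _ hne1 hne2]
  by_cases hu2 : 2 ≤ u ∧ u ≤ m - 2
  · have hz : B (w (c + 1 + u)) (w (c + 1)) = 0 := by
      have hc := h.chord (c + 1 + u) (m - u) (by omega) (by omega)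
      rwa [show c + 1 + u + (m - u) = c + 1 + m by omega, h.per] at hc
    rw [hz, fmut_zero_left, add_zero]
  · by_cases hv2 : 2 ≤ v ∧ v ≤ m - 2
    · have hz : B (w (c + 1)) (w (c + 1 + v)) = 0 := h.chord (c + 1) v hv2.1 (by omega)
      rw [hz, fmut_zero_right, add_zero]
    · exfalso; omega

/-- Value of the mutated matrix at the shortcut pair `(c, c+2)`. -/
lemma mut_cc2 (h : UC B m w) (hm : 4 ≤ m) (c : ℕ) :
    mutate (w (c + 1)) B (w c) (w (c + 2)) =
      fmut (B (w c) (w (c + 1))) (B (w (c + 1)) (w (c + 2))) := by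
  have hm0 : 0 < m := by omega
  have hne1 : w c ≠ w (c + 1) := by
    have := h.w_ne_off hm0 c (u := 0) (v := 1) (by omega) (by omega) (by omega)
    simpa using this
  have hne2 : w (c + 2) ≠ w (c + 1) := by
    have := h.w_ne_off hm0 c (u := 2) (v := 1) (by omega) (by omega) (by omega)
    simpa using this
  rw [mutate_apply_ne _ _ hne1 hne2, h.chord c 2 le_rfl (by omega), zero_add]

/-- Contracting a cycle at a "flow-through" vertex `c+1`. -/
lemma contract (h : UC B m w) (hm : 4 ≤ m) (c : ℕ)
    (hsame : 0 < B (w c) (w (c + 1)) * B (w (c + 1)) (w (c + 2))) :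
    UC (mutate (w (c + 1)) B) (m - 1) (fun i => w (c + 2 + i % (m - 1))) := by
  have hm0 : 0 < m := by omega
  have hm1 : 0 < m - 1 := by omega
  constructor
  · intro i
    simp only [Nat.add_mod_right]
  · intro p q hp hq he
    simp only [Nat.mod_eq_of_lt hp, Nat.mod_eq_of_lt hq] at he
    exact offset_cancel (m := m) (by omega) (by omega) ((h.w_eq_iff hm0).mp he)
  · intro i
    set r := i % (m - 1) with hr
    have hrlt : r < m - 1 := Nat.mod_lt _ hm1
    have hi1 : (i + 1) % (m - 1) = (r + 1) % (m - 1) := by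
      rw [Nat.add_mod, ← hr, Nat.mod_eq_of_lt (show 1 < m - 1 by omega)]
    show mutate (w (c + 1)) B (w (c + 2 + i % (m - 1))) (w (c + 2 + (i + 1) % (m - 1))) ≠ 0
    rw [← hr, hi1]
    rcases lt_or_eq_of_le (show r ≤ m - 2 by omega) with hcase | hcase
    · rw [Nat.mod_eq_of_lt (show r + 1 < m - 1 by omega)]
      have hmp := h.mut_pair (by omega) c (u := r + 1) (v := r + 2)
        (by omega) (by omega) (by omega) (by omega) (by omega)
        (by omega) (by omega)
      rw [show c + 1 + (r + 1) = c + 2 + r by omega, show c + 1 + (r + 2) = c + 2 + r + 1 by omega]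
        at hmp
      rw [show c + 2 + (r + 1) = c + 2 + r + 1 by omega, hmp]
      exact h.edge (c + 2 + r)
    · rw [show (r + 1) % (m - 1) = 0 from by
        rw [show r + 1 = m - 1 by omega]; exact Nat.mod_self _]
      rw [show c + 2 + r = c + m by omega, h.per c, Nat.add_zero]
      rw [h.mut_cc2 hm c]
      rcases lt_trichotomy (B (w c) (w (c + 1))) 0 with h1 | h1 | h1
      · have h2 : B (w (c + 1)) (w (c + 2)) < 0 := by nlinarith
        rw [fmut_neg h1 h2]; intro h0; nlinarith
      · rw [h1, zero_mul] at hsame; exact absurd hsame (lt_irrefl 0)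
      · have h2 : 0 < B (w (c + 1)) (w (c + 2)) := by nlinarith
        rw [fmut_pos h1 h2]; intro h0; nlinarith
  · intro i t ht2 htm
    set r := i % (m - 1) with hr
    have hrlt : r < m - 1 := Nat.mod_lt _ hm1
    have hit : (i + t) % (m - 1) = (r + t) % (m - 1) := by
      rw [Nat.add_mod, ← hr, Nat.mod_eq_of_lt (show t < m - 1 by omega)]
    show mutate (w (c + 1)) B (w (c + 2 + i % (m - 1))) (w (c + 2 + (i + t) % (m - 1))) = 0
    rw [← hr, hit]
    rcases le_or_gt (r + t) (m - 2) with hcase | hcase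
    · rw [Nat.mod_eq_of_lt (show r + t < m - 1 by omega)]
      have hmp := h.mut_pair (by omega) c (u := r + 1) (v := r + t + 1)
        (by omega) (by omega) (by omega) (by omega) (by omega) (by omega) (by omega)
      rw [show c + 1 + (r + 1) = c + 2 + r by omega,
        show c + 1 + (r + t + 1) = c + 2 + (r + t) by omega] at hmp
      rw [hmp]
      have hc := h.chord (c + 2 + r) t ht2 (by omega)
      rwa [show c + 2 + r + t = c + 2 + (r + t) by omega] at hc
    · have hsub : (r + t) % (m - 1) = r + t - (m - 1) := by
        rw [Nat.mod_eq_sub_mod (by omega), Nat.mod_eq_of_lt (by omega)]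
      rw [hsub]
      set v0 := r + t - (m - 1) with hv0
      have hmp := h.mut_pair (by omega) c (u := r + 1) (v := v0 + 1)
        (by omega) (by omega) (by omega) (by omega) (by omega) (by omega) (by omega)
      rw [show c + 1 + (r + 1) = c + 2 + r by omega,
        show c + 1 + (v0 + 1) = c + 2 + v0 by omega] at hmp
      rw [hmp]
      have hc := h.chord (c + 2 + r) (t + 1) (by omega) (by omega)
      rwa [show c + 2 + r + (t + 1) = (c + 2 + v0) + m by omega, h.per] at hc

/-- Mutating at a sink of the cycle: the cycle structure is preserved. -/
lemma sink_flip (h : UC B m w) (hm : 4 ≤ m) (hs : IsSkewSymmetrizable B) (c : ℕ)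
    (hpos : 0 < B (w c) (w (c + 1))) (hneg : B (w (c + 1)) (w (c + 2)) < 0) :
    UC (mutate (w (c + 1)) B) m w := by
  have hm0 : 0 < m := by omega
  constructor
  · exact h.per
  · exact h.inj
  · intro i
    obtain ⟨u, hu, hmod⟩ := offset_exists hm0 (c + 1) i
    have hi1 : w i = w (c + 1 + u) := (h.w_eq hmod).symm
    have hi2 : w (i + 1) = w (c + 1 + u + 1) := (h.w_eq (Nat.ModEq.add_right 1 hmod)).symm
    rw [hi1, hi2]
    rcases Nat.lt_or_ge u 1 with hu0 | hu0
    · have hu0 : u = 0 := by omega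
      subst hu0
      rw [show c + 1 + 0 = c + 1 by omega, show c + 1 + 0 + 1 = c + 2 by omega,
        mutate_apply_left]
      exact neg_ne_zero.mpr (ne_of_lt hneg)
    · rcases Nat.lt_or_ge u (m - 1) with hu1 | hu1
      · have hmp := h.mut_pair (by omega) c (u := u) (v := u + 1)
          (by omega) (by omega) (by omega) (by omega) (by omega) (by omega) (by omega)
        rw [show c + 1 + (u + 1) = c + 1 + u + 1 by omega] at hmp
        rw [hmp]
        exact h.edge (c + 1 + u)
      · have hu1 : u = m - 1 := by omega
        subst hu1
        rw [show c + 1 + (m - 1) = c + m by omega, h.per c,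
          show c + m + 1 = (c + 1) + m by omega, h.per (c + 1), mutate_apply_right]
        exact neg_ne_zero.mpr (ne_of_gt hpos)
  · intro i t ht2 htm
    obtain ⟨u, hu, hmod⟩ := offset_exists hm0 (c + 1) i
    have hi1 : w i = w (c + 1 + u) := (h.w_eq hmod).symm
    have hi2 : w (i + t) = w (c + 1 + u + t) := (h.w_eq (Nat.ModEq.add_right t hmod)).symm
    rw [hi1, hi2]
    obtain ⟨v, hvm, hveq⟩ : ∃ v, v ≤ m - 1 ∧ (v = u + t ∨ v + m = u + t) := by
      rcases le_or_gt (u + t) (m - 1) with h' | h'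
      · exact ⟨u + t, h', Or.inl rfl⟩
      · exact ⟨u + t - m, by omega, Or.inr (by omega)⟩
    have hwv : w (c + 1 + u + t) = w (c + 1 + v) := by
      rcases hveq with hveq | hveq
      · rw [show c + 1 + u + t = c + 1 + v by omega]
      · rw [show c + 1 + u + t = (c + 1 + v) + m by omega, h.per]
    rw [hwv]
    by_cases hu0 : u = 0
    · subst hu0
      have hvt : v = t := by omega
      subst hvt
      rw [show c + 1 + 0 = c + 1 by omega, mutate_apply_left,
        h.chord (c + 1) v ht2 (by omega), neg_zero]
    · by_cases hv0 : v = 0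
      · subst hv0
        have hut : u + t = m := by omega
        rw [show c + 1 + 0 = c + 1 by omega, mutate_apply_right]
        have hc := h.chord (c + 1 + u) (m - u) (by omega) (by omega)
        rw [show c + 1 + u + (m - u) = (c + 1) + m by omega, h.per] at hc
        rw [hc, neg_zero]
      · by_cases hsp1 : u = m - 1 ∧ v = 1
        · obtain ⟨hu1, hv1⟩ := hsp1
          subst hu1; subst hv1
          rw [show c + 1 + (m - 1) = c + m by omega, h.per c,
            show c + 1 + 1 = c + 2 by omega]
          have hne1 : w c ≠ w (c + 1) := by
            have := h.w_ne_off hm0 c (u := 0) (v := 1) (by omega) (by omega) (by omega)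
            simpa using this
          have hne2 : w (c + 2) ≠ w (c + 1) := by
            have := h.w_ne_off hm0 c (u := 2) (v := 1) (by omega) (by omega) (by omega)
            simpa using this
          rw [mutate_apply_ne _ _ hne1 hne2, h.chord c 2 le_rfl (by omega), zero_add]
          exact fmut_mix (le_of_lt (mul_neg_of_pos_of_neg hpos hneg))
        · by_cases hsp2 : u = 1 ∧ v = m - 1
          · obtain ⟨hu1, hv1⟩ := hsp2
            subst hu1; subst hv1
            rw [show c + 1 + 1 = c + 2 by omega,
              show c + 1 + (m - 1) = c + m by omega, h.per c]
            have hne1 : w (c + 2) ≠ w (c + 1) := by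
              have := h.w_ne_off hm0 c (u := 2) (v := 1) (by omega) (by omega) (by omega)
              simpa using this
            have hne2 : w c ≠ w (c + 1) := by
              have := h.w_ne_off hm0 c (u := 0) (v := 1) (by omega) (by omega) (by omega)
              simpa using this
            have hch : B (w (c + 2)) (w c) = 0 := by
              have hc2 := h.chord (c + 2) (m - 2) (by omega) (by omega)
              rwa [show c + 2 + (m - 2) = c + m by omega, h.per c] at hc2
            rw [mutate_apply_ne _ _ hne1 hne2, hch, zero_add]
            have hzy : 0 < B (w (c + 2)) (w (c + 1)) := skew_pos_of_neg hs hneg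
            have hzx : B (w (c + 1)) (w c) < 0 := skew_neg_of_pos hs hpos
            exact fmut_mix (le_of_lt (mul_neg_of_pos_of_neg hzy hzx))
          · have hmp := h.mut_pair (by omega) c (u := u) (v := v)
              (by omega) (by omega) (by omega) (by omega) (by omega) hsp1 hsp2
            rw [hmp]
            rcases hveq with hveq | hveq
            · have hc := h.chord (c + 1 + u) t ht2 (by omega)
              rwa [show c + 1 + u + t = c + 1 + v by omega] at hc
            · have hc := h.chord (c + 1 + u) t ht2 (by omega)
              rwa [show c + 1 + u + t = (c + 1 + v) + m by omega, h.per] at hc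

/-- If the cycle has an edge in each direction, it has a "descent": a positive
edge followed by a negative one. -/
lemma descent (h : UC B m w) (hm : 0 < m) {p q : ℕ}
    (hp : 0 < B (w p) (w (p + 1))) (hq : B (w q) (w (q + 1)) < 0) :
    ∃ c, 0 < B (w c) (w (c + 1)) ∧ B (w (c + 1)) (w (c + 2)) < 0 := by
  by_contra hno
  push_neg at hno
  have step : ∀ t, 0 < B (w (p + t)) (w (p + t + 1)) := by
    intro t
    induction t with
    | zero => simpa using hp
    | succ t ih =>
      have h2 := hno (p + t) ih
      have he := h.edge (p + t + 1)
      rw [show p + t + 1 + 1 = p + t + 2 by omega] at he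
      rw [show p + (t + 1) = p + t + 1 by omega, show p + t + 1 + 1 = p + t + 2 by omega]
      rcases he.lt_or_gt with h' | h'
      · exact absurd h' (not_lt.mpr h2)
      · exact h'
  obtain ⟨u, hu, hmod⟩ := offset_exists hm p q
  have e1 : w (p + u) = w q := h.w_eq hmod
  have e2 : w (p + u + 1) = w (q + 1) := h.w_eq (Nat.ModEq.add_right 1 hmod)
  have := step u
  rw [e1, e2] at this
  linarith

end UC

/-- Main induction: a chordless cycle in a 2-finite skew-symmetrizable matrix cannot
have edges in both directions (i.e. it must be cyclically oriented). -/
lemma noNonor : ∀ m : ℕ, 3 ≤ m → ∀ (B : Matrix (Fin n) (Fin n) ℤ) (w : ℕ → Fin n),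
    IsSkewSymmetrizable B → IsFiniteType B → UC B m w →
    ∀ p q : ℕ, 0 < B (w p) (w (p + 1)) → B (w q) (w (q + 1)) < 0 → False := by
  intro m
  induction m using Nat.strong_induction_on with
  | _ m IH =>
  intro hm B w hs hft h p q hp hq
  rcases Nat.lt_or_ge m 4 with hm3 | hm4
  · -- m = 3 : find a sink, get a bad triangle
    have hm3 : m = 3 := by omega
    subst hm3
    obtain ⟨c, hc1, hc2⟩ := h.descent (by omega) hp hq
    have he := h.edge (c + 2)
    rw [show c + 2 + 1 = c + 3 by omega, show (c + 3 : ℕ) = c + 3 by omega] at he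
    have hw : w (c + 3) = w c := h.per c
    rw [hw] at he
    rcases he.lt_or_gt with hlt | hgt
    · exact badTriangle hs hft (skew_pos_of_neg hs hlt) (skew_pos_of_neg hs hc2) hc1
    · exact badTriangle hs hft hgt hc1 (skew_pos_of_neg hs hc2)
  · -- m ≥ 4
    have key : ∀ (B : Matrix (Fin n) (Fin n) ℤ) (w : ℕ → Fin n),
        IsSkewSymmetrizable B → IsFiniteType B → UC B m w → ∀ c x : ℕ,
        0 < B (w c) (w (c + 1)) * B (w (c + 1)) (w (c + 2)) →
        B (w x) (w (x + 1)) * B (w c) (w (c + 1)) < 0 → False := by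
      intro B w hs hft h c x hflow hopp
      obtain ⟨u, hu, hmod⟩ := offset_exists (show 0 < m by omega) (c + 2) x
      have hx1 : w x = w (c + 2 + u) := (h.w_eq hmod).symm
      have hx2 : w (x + 1) = w (c + 2 + u + 1) := (h.w_eq (Nat.ModEq.add_right 1 hmod)).symm
      rw [hx1, hx2] at hopp
      have hum : u ≤ m - 3 := by
        by_contra hcon
        rcases (show u = m - 2 ∨ u = m - 1 by omega) with h' | h'
        · subst h'
          rw [show c + 2 + (m - 2) = c + m by omega, h.per c,
            show c + m + 1 = (c + 1) + m by omega, h.per (c + 1)] at hopp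
          nlinarith
        · subst h'
          rw [show c + 2 + (m - 1) = (c + 1) + m by omega, h.per (c + 1),
            show c + 1 + m + 1 = (c + 2) + m by omega, h.per (c + 2)] at hopp
          nlinarith
      have hUC2 := h.contract hm4 c hflow
      have hs' := skew_mutate hs (w (c + 1))
      have hft' := ft_mutate hft (w (c + 1))
      set B' := mutate (w (c + 1)) B with hB'
      have heu : B' (w (c + 2 + u % (m - 1))) (w (c + 2 + (u + 1) % (m - 1)))
          = B (w (c + 2 + u)) (w (c + 2 + u + 1)) := by
        rw [Nat.mod_eq_of_lt (show u < m - 1 by omega),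
          Nat.mod_eq_of_lt (show u + 1 < m - 1 by omega)]
        have hmp := h.mut_pair (by omega) c (u := u + 1) (v := u + 2)
          (by omega) (by omega) (by omega) (by omega) (by omega) (by omega) (by omega)
        rw [show c + 1 + (u + 1) = c + 2 + u by omega,
          show c + 1 + (u + 2) = c + 2 + (u + 1) by omega] at hmp
        rw [show c + 2 + u + 1 = c + 2 + (u + 1) by omega]
        exact hmp
      have hmerge : B' (w (c + 2 + (m - 2) % (m - 1))) (w (c + 2 + (m - 2 + 1) % (m - 1)))
          = fmut (B (w c) (w (c + 1))) (B (w (c + 1)) (w (c + 2))) := by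
        rw [Nat.mod_eq_of_lt (show m - 2 < m - 1 by omega),
          show (m - 2 + 1) % (m - 1) = 0 from by
            rw [show m - 2 + 1 = m - 1 by omega]; exact Nat.mod_self _]
        rw [show c + 2 + (m - 2) = c + m by omega, h.per c, Nat.add_zero]
        exact h.mut_cc2 hm4 c
      have hIH := IH (m - 1) (by omega) (by omega) B'
        (fun i => w (c + 2 + i % (m - 1))) hs' hft' hUC2
      rcases lt_trichotomy (B (w c) (w (c + 1))) 0 with h1 | h1 | h1
      · have h2 : B (w (c + 1)) (w (c + 2)) < 0 := by nlinarith
        refine hIH u (m - 2) ?_ ?_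
        · show 0 < B' (w (c + 2 + u % (m - 1))) (w (c + 2 + (u + 1) % (m - 1)))
          rw [heu]; nlinarith
        · show B' (w (c + 2 + (m - 2) % (m - 1))) (w (c + 2 + (m - 2 + 1) % (m - 1))) < 0
          rw [hmerge, fmut_neg h1 h2]; nlinarith
      · rw [h1, zero_mul] at hflow; exact absurd hflow (lt_irrefl 0)
      · have h2 : 0 < B (w (c + 1)) (w (c + 2)) := by nlinarith
        refine hIH (m - 2) u ?_ ?_
        · show 0 < B' (w (c + 2 + (m - 2) % (m - 1))) (w (c + 2 + (m - 2 + 1) % (m - 1)))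
          rw [hmerge, fmut_pos h1 h2]; nlinarith
        · show B' (w (c + 2 + u % (m - 1))) (w (c + 2 + (u + 1) % (m - 1))) < 0
          rw [heu]; nlinarith
    by_cases hfl : ∃ c, 0 < B (w c) (w (c + 1)) * B (w (c + 1)) (w (c + 2))
    · obtain ⟨c, hc⟩ := hfl
      rcases lt_trichotomy (B (w c) (w (c + 1))) 0 with h1 | h1 | h1
      · exact key B w hs hft h c p hc (by nlinarith)
      · rw [h1, zero_mul] at hc; exact absurd hc (lt_irrefl 0)
      · exact key B w hs hft h c q hc (by nlinarith)
    · push_neg at hfl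
      obtain ⟨c, hc1, hc2⟩ := h.descent (by omega) hp hq
      have h3 : 0 < B (w (c + 2)) (w (c + 3)) := by
        have hf := hfl (c + 1)
        rw [show c + 1 + 1 = c + 2 by omega, show c + 1 + 2 = c + 3 by omega] at hf
        have he := h.edge (c + 2)
        rw [show c + 2 + 1 = c + 3 by omega] at he
        rcases he.lt_or_gt with h' | h'
        · nlinarith
        · exact h'
      have hUC1 := h.sink_flip hm4 hs c hc1 hc2
      set B1 := mutate (w (c + 1)) B with hB1
      have e1 : B1 (w (c + 1)) (w (c + 2)) = -B (w (c + 1)) (w (c + 2)) :=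
        mutate_apply_left _ _ _
      have e2 : B1 (w (c + 2)) (w (c + 3)) = B (w (c + 2)) (w (c + 3)) := by
        have hmp := h.mut_pair (by omega) c (u := 1) (v := 2)
          (by omega) (by omega) (by omega) (by omega) (by omega) (by omega) (by omega)
        rw [show c + 1 + 1 = c + 2 by omega, show c + 1 + 2 = c + 3 by omega] at hmp
        exact hmp
      have e0 : B1 (w c) (w (c + 1)) = -B (w c) (w (c + 1)) := mutate_apply_right _ _ _
      refine key B1 w (skew_mutate hs _) (ft_mutate hft _) hUC1 (c + 1) c ?_ ?_
      · rw [show c + 1 + 1 = c + 2 by omega, show c + 1 + 2 = c + 3 by omega, e1, e2]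
        nlinarith
      · rw [show c + 1 + 1 = c + 2 by omega, e0, e1]
        nlinarith

/-- The key sign lemma: if `k` is attached to `v a` and `v (a+t)` (`1 ≤ t ≤ d-2`) and to no
vertex strictly between them, then the cycle through `k` and the arc forces
`B k (v a) > 0` and `B k (v (a+t)) < 0`. -/
lemma attach_sign (B : Matrix (Fin n) (Fin n) ℤ) (hs : IsSkewSymmetrizable B)
    (hft : IsFiniteType B) {d : ℕ} (hd : 3 ≤ d) (v : ZMod d → Fin n)
    (hcyc : IsChordlessCycle B v) (k : Fin n) (hk : ∀ a : ZMod d, v a ≠ k)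
    (a : ZMod d) (t : ℕ) (ht1 : 0 < t) (ht2 : t ≤ d - 2)
    (ha : B k (v a) ≠ 0) (hb : B k (v (a + (t : ZMod d))) ≠ 0)
    (hint : ∀ j : ℕ, 0 < j → j < t → B k (v (a + (j : ZMod d))) = 0) :
    0 < B k (v a) ∧ B k (v (a + (t : ZMod d))) < 0 := by
  haveI : NeZero d := ⟨by omega⟩
  obtain ⟨hinj, hposE, hch⟩ := hcyc
  have cast_inj : ∀ x y : ℕ, x < d → y < d → (x : ZMod d) = (y : ZMod d) → x = y := by
    intro x y hx hy hxy
    have := congrArg ZMod.val hxy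
    rwa [ZMod.val_cast_of_lt hx, ZMod.val_cast_of_lt hy] at this
  set m := t + 2 with hmdef
  set w : ℕ → Fin n := fun i => if i % m = t + 1 then k else v (a + ((i % m : ℕ) : ZMod d))
    with hw
  have cast_ne : ∀ x y : ℕ, x < d → y < d → x ≠ y →
      a + (x : ZMod d) ≠ a + (y : ZMod d) := by
    intro x y hx hy hxy he
    exact hxy (cast_inj x y hx hy (add_left_cancel he))
  have shift : ∀ x : ℕ, (a + (x : ZMod d)) + 1 = a + ((x + 1 : ℕ) : ZMod d) := by
    intro x; push_cast; ring
  have hUC : UC B m w := by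
    constructor
    · intro i; simp only [hw, Nat.add_mod_right]
    · intro p q hp hq he
      simp only [hw, Nat.mod_eq_of_lt hp, Nat.mod_eq_of_lt hq] at he
      by_cases hp1 : p = t + 1 <;> by_cases hq1 : q = t + 1
      · omega
      · rw [if_pos hp1, if_neg hq1] at he; exact absurd he.symm (hk _)
      · rw [if_neg hp1, if_pos hq1] at he; exact absurd he (hk _)
      · rw [if_neg hp1, if_neg hq1] at he
        have h2 := add_left_cancel (hinj he)
        exact cast_inj p q (by omega) (by omega) h2
    · intro i
      obtain ⟨r, hrlt, hre⟩ : ∃ r, r < m ∧ i % m = r := ⟨_, Nat.mod_lt _ (by omega), rfl⟩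
      have hi1 : (i + 1) % m = (r + 1) % m := by
        rw [Nat.add_mod, hre, Nat.mod_eq_of_lt (show 1 < m by omega)]
      simp only [hw]
      rw [hre, hi1]
      rcases (show r + 1 ≤ t ∨ r = t ∨ r = t + 1 by omega) with hc | hc | hc
      · rw [Nat.mod_eq_of_lt (show r + 1 < m by omega), if_neg (show ¬ r = t + 1 by omega),
          if_neg (show ¬ r + 1 = t + 1 by omega)]
        rw [show a + ((r + 1 : ℕ) : ZMod d) = (a + (r : ZMod d)) + 1 from (shift r).symm]
        exact (hposE (a + (r : ZMod d))).ne'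
      · subst hc
        rw [Nat.mod_eq_of_lt (show r + 1 < m by omega), if_neg (show ¬ r = r + 1 by omega),
          if_pos rfl]
        exact skew_ne_zero hs hb
      · subst hc
        have hz : (t + 1 + 1) % m = 0 := by
          rw [show t + 1 + 1 = m by omega]; exact Nat.mod_self _
        rw [if_pos rfl, hz, if_neg (show ¬ (0 : ℕ) = t + 1 by omega)]
        rw [Nat.cast_zero, add_zero]
        exact ha
    · intro i s hs2 hsm
      obtain ⟨r, hrlt, hre⟩ : ∃ r, r < m ∧ i % m = r := ⟨_, Nat.mod_lt _ (by omega), rfl⟩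
      have hi1 : (i + s) % m = (r + s) % m := by
        rw [Nat.add_mod, hre, Nat.mod_eq_of_lt (show s < m by omega)]
      simp only [hw]
      rw [hre, hi1]
      have hsd : s ≤ t := by omega
      rcases (show r + s ≤ t ∨ (r + s = t + 1 ∧ r ≤ t) ∨ r = t + 1 ∨
          (r ≤ t ∧ t + 2 ≤ r + s) by omega) with hc | hc | hc | hc
      · rw [Nat.mod_eq_of_lt (show r + s < m by omega), if_neg (show ¬ r = t + 1 by omega),
          if_neg (show ¬ r + s = t + 1 by omega)]
        refine hch _ _ (cast_ne r (r + s) (by omega) (by omega) (by omega)) ?_ ?_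
        · rw [shift r]; exact cast_ne (r + s) (r + 1) (by omega) (by omega) (by omega)
        · rw [shift (r + s)]; exact cast_ne r (r + s + 1) (by omega) (by omega) (by omega)
      · obtain ⟨hc, hcr⟩ := hc
        rw [Nat.mod_eq_of_lt (show r + s < m by omega), if_neg (show ¬ r = t + 1 by omega),
          if_pos hc]
        exact skew_zero hs (hint r (by omega) (by omega))
      · subst hc
        have hsub : (t + 1 + s) % m = s - 1 := by
          rw [Nat.mod_eq_sub_mod (by omega), show t + 1 + s - m = s - 1 by omega,
            Nat.mod_eq_of_lt (by omega)]
        rw [if_pos rfl, hsub, if_neg (show ¬ s - 1 = t + 1 by omega)]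
        exact hint (s - 1) (by omega) (by omega)
      · obtain ⟨hcr, hcs⟩ := hc
        have hsub : (r + s) % m = r + s - m := by
          rw [Nat.mod_eq_sub_mod (by omega), Nat.mod_eq_of_lt (by omega)]
        rw [hsub, if_neg (show ¬ r = t + 1 by omega),
          if_neg (show ¬ r + s - m = t + 1 by omega)]
        refine hch _ _ (cast_ne r (r + s - m) (by omega) (by omega) (by omega)) ?_ ?_
        · rw [shift r]; exact cast_ne (r + s - m) (r + 1) (by omega) (by omega) (by omega)
        · rw [shift (r + s - m)]
          exact cast_ne r (r + s - m + 1) (by omega) (by omega) (by omega)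
  have hNN := noNonor m (by omega) B w hs hft hUC
  have hw0 : w 0 = v a := by
    simp only [hw]
    rw [Nat.zero_mod, if_neg (show ¬ (0 : ℕ) = t + 1 by omega), Nat.cast_zero, add_zero]
  have hw1 : w 1 = v (a + 1) := by
    simp only [hw]
    rw [Nat.mod_eq_of_lt (show 1 < m by omega), if_neg (show ¬ (1 : ℕ) = t + 1 by omega),
      Nat.cast_one]
  have hwt : w t = v (a + (t : ZMod d)) := by
    simp only [hw]
    rw [Nat.mod_eq_of_lt (show t < m by omega), if_neg (show ¬ t = t + 1 by omega)]
  have hwt1 : w (t + 1) = k := by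
    simp only [hw]
    rw [Nat.mod_eq_of_lt (show t + 1 < m by omega), if_pos rfl]
  have hwt2 : w (t + 2) = v a := by
    simp only [hw]
    rw [show t + 2 = m by omega, Nat.mod_self, if_neg (show ¬ (0 : ℕ) = t + 1 by omega),
      Nat.cast_zero, add_zero]
  have hE0 : 0 < B (w 0) (w (0 + 1)) := by
    rw [show (0 : ℕ) + 1 = 1 from rfl, hw0, hw1]
    exact hposE a
  have hEt : 0 < B (w t) (w (t + 1)) := by
    have hne : B (w t) (w (t + 1)) ≠ 0 := by
      rw [hwt, hwt1]; exact skew_ne_zero hs hb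
    rcases hne.lt_or_gt with h' | h'
    · exact (hNN 0 t hE0 h').elim
    · exact h'
  have hEt1 : 0 < B (w (t + 1)) (w (t + 1 + 1)) := by
    have hne : B (w (t + 1)) (w (t + 1 + 1)) ≠ 0 := by
      rw [show t + 1 + 1 = t + 2 from rfl, hwt1, hwt2]; exact ha
    rcases hne.lt_or_gt with h' | h'
    · exact (hNN 0 (t + 1) hE0 h').elim
    · exact h'
  constructor
  · rw [show t + 1 + 1 = t + 2 from rfl, hwt1, hwt2] at hEt1
    exact hEt1
  · rw [hwt, hwt1] at hEt
    exact skew_neg_of_pos hs hEt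

/-- From an attached vertex `a` and another attached vertex not equal to `a` or `a-1`,
produce the sign information. -/
lemma master (B : Matrix (Fin n) (Fin n) ℤ) (hs : IsSkewSymmetrizable B)
    (hft : IsFiniteType B) {d : ℕ} (hd : 3 ≤ d) (v : ZMod d → Fin n)
    (hcyc : IsChordlessCycle B v) (k : Fin n) (hk : ∀ a : ZMod d, v a ≠ k)
    (a : ZMod d) (ha : B k (v a) ≠ 0)
    (hex : ∃ b : ZMod d, B k (v b) ≠ 0 ∧ b ≠ a ∧ b ≠ a + ((d - 1 : ℕ) : ZMod d)) :
    0 < B k (v a) ∧ ∃ a' : ZMod d, B k (v a') < 0 := by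
  haveI : NeZero d := ⟨by omega⟩
  classical
  obtain ⟨b, hb, hba, hbm⟩ := hex
  have hval : ((b - a).val : ZMod d) = b - a := ZMod.natCast_zmod_val _
  have hmem : 0 < (b - a).val ∧ B k (v (a + ((b - a).val : ZMod d))) ≠ 0 := by
    constructor
    · rcases Nat.eq_zero_or_pos (b - a).val with h0 | h0
      · exact absurd ((ZMod.val_eq_zero _).mp h0) (sub_ne_zero.mpr hba)
      · exact h0
    · rw [hval, show a + (b - a) = b by ring]
      exact hb
  have hPex : ∃ t : ℕ, 0 < t ∧ B k (v (a + (t : ZMod d))) ≠ 0 := ⟨_, hmem⟩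
  obtain ⟨ht0, hA'⟩ := Nat.find_spec hPex
  have hle : Nat.find hPex ≤ (b - a).val := Nat.find_min' hPex hmem
  have hvl : (b - a).val < d := ZMod.val_lt _
  have hvne : (b - a).val ≠ d - 1 := by
    intro h1
    apply hbm
    rw [← h1, hval]
    ring
  have ht2 : Nat.find hPex ≤ d - 2 := by omega
  have hint : ∀ j : ℕ, 0 < j → j < Nat.find hPex → B k (v (a + (j : ZMod d))) = 0 := by
    intro j hj hjt
    by_contra hne
    exact Nat.find_min hPex hjt ⟨hj, hne⟩
  obtain ⟨hpos, hneg⟩ := attach_sign B hs hft hd v hcyc k hk a (Nat.find hPex) ht0 ht2 ha hA' hint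
  exact ⟨hpos, _, hneg⟩

/-- Lemma 2.5: if a vertex `k` of a diagram of finite type does not lie on a
chordless cycle `v 0 → v 1 → ⋯ → v (d-1) → v 0` but is connected by an edge to at least one of
its vertices, then `k` is connected to at most two vertices of the cycle, and if it is connected
to two of them then they are adjacent in the cycle. -/
theorem vertex_attached_to_chordless_cycle
    (B : Matrix (Fin n) (Fin n) ℤ)
    (hskew : IsSkewSymmetrizable B) (hft : IsFiniteType B)
    {d : ℕ} (hd : 3 ≤ d) (v : ZMod d → Fin n) (hcyc : IsChordlessCycle B v)
    (k : Fin n) (hk : ∀ a : ZMod d, v a ≠ k)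
    (hconn : ∃ a : ZMod d, B k (v a) ≠ 0) :
    (∀ a b c : ZMod d, a ≠ b → b ≠ c → a ≠ c →
        ¬(B k (v a) ≠ 0 ∧ B k (v b) ≠ 0 ∧ B k (v c) ≠ 0)) ∧
    (∀ a b : ZMod d, a ≠ b → B k (v a) ≠ 0 → B k (v b) ≠ 0 → b = a + 1 ∨ a = b + 1) := by
  haveI : NeZero d := ⟨by omega⟩
  have hm1 : ((d - 1 : ℕ) : ZMod d) = -1 := by
    rw [Nat.cast_sub (show 1 ≤ d by omega), ZMod.natCast_self, Nat.cast_one]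
    ring
  constructor
  · intro a b c hab hbc hac
    rintro ⟨ha, hb, hc⟩
    have hwa : ∃ y, B k (v y) ≠ 0 ∧ y ≠ a ∧ y ≠ a + ((d - 1 : ℕ) : ZMod d) := by
      by_cases hb' : b = a + ((d - 1 : ℕ) : ZMod d)
      · exact ⟨c, hc, hac.symm, fun h => hbc (hb'.trans h.symm)⟩
      · exact ⟨b, hb, hab.symm, hb'⟩
    obtain ⟨hpa, a', hna'⟩ := master B hskew hft hd v hcyc k hk a ha hwa
    have ha' : B k (v a') ≠ 0 := ne_of_lt hna'
    have hwa' : ∃ y, B k (v y) ≠ 0 ∧ y ≠ a' ∧ y ≠ a' + ((d - 1 : ℕ) : ZMod d) := by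
      by_cases h1 : a ≠ a' ∧ a ≠ a' + ((d - 1 : ℕ) : ZMod d)
      · exact ⟨a, ha, h1.1, h1.2⟩
      by_cases h2 : b ≠ a' ∧ b ≠ a' + ((d - 1 : ℕ) : ZMod d)
      · exact ⟨b, hb, h2.1, h2.2⟩
      by_cases h3 : c ≠ a' ∧ c ≠ a' + ((d - 1 : ℕ) : ZMod d)
      · exact ⟨c, hc, h3.1, h3.2⟩
      exfalso
      have h1' : a = a' ∨ a = a' + ((d - 1 : ℕ) : ZMod d) := by tauto
      have h2' : b = a' ∨ b = a' + ((d - 1 : ℕ) : ZMod d) := by tauto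
      have h3' : c = a' ∨ c = a' + ((d - 1 : ℕ) : ZMod d) := by tauto
      rcases h1' with h1' | h1' <;> rcases h2' with h2' | h2' <;> rcases h3' with h3' | h3' <;>
        first
          | exact hab (h1'.trans h2'.symm)
          | exact hbc (h2'.trans h3'.symm)
          | exact hac (h1'.trans h3'.symm)
    obtain ⟨hpa', _, _⟩ := master B hskew hft hd v hcyc k hk a' ha' hwa'
    linarith
  · intro a b hab ha hb
    by_contra hcon
    push_neg at hcon
    obtain ⟨h1, h2⟩ := hcon
    have hwa : ∃ y, B k (v y) ≠ 0 ∧ y ≠ a ∧ y ≠ a + ((d - 1 : ℕ) : ZMod d) := by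
      refine ⟨b, hb, hab.symm, fun h => h2 ?_⟩
      rw [h, hm1]
      ring
    obtain ⟨hpa, a', hna'⟩ := master B hskew hft hd v hcyc k hk a ha hwa
    have ha' : B k (v a') ≠ 0 := ne_of_lt hna'
    have hwa' : ∃ y, B k (v y) ≠ 0 ∧ y ≠ a' ∧ y ≠ a' + ((d - 1 : ℕ) : ZMod d) := by
      by_cases hA : a = a' + ((d - 1 : ℕ) : ZMod d)
      · have ha'eq : a' = a + 1 := by rw [hA, hm1]; ring
        refine ⟨b, hb, ?_, ?_⟩
        · rw [ha'eq]; exact h1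
        · intro hbe
          rw [hm1, ha'eq] at hbe
          exact hab.symm (by rw [hbe]; ring)
      · refine ⟨a, ha, ?_, hA⟩
        intro h0
        rw [h0] at hpa
        linarith
    obtain ⟨hpa', _, _⟩ := master B hskew hft hd v hcyc k hk a' ha' hwa'
    linarith


end ClusterReflection
end

section
/- Let Γ be a diagram of finite type on vertices 1,…,n containing a chordless cycle C: i_0→i_1→⋯→i_{d-1}→i_0 with all edge weights equal to 1. Let W be the group with generators s_1,…,s_n subject to relations (R1), (R2) and the single additional relation r(i_a,i_{a+1})² = e for one fixed value of a. Then r(i_b,i_{b+1})² = e holds in W for every b = 0,1,…,d−1. -/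
namespace ClusterReflection

variable {n : ℕ}

section Aux

variable {W : Type*} [Group W]

/-- ascending product `t i * t (i+1) * ⋯ * t (i+m-1)` -/
def asc (t : ℕ → W) (i m : ℕ) : W := ((List.range m).map fun j => t (i + j)).prod

/-- descending product `t (i+m-1) * ⋯ * t (i+1) * t i` -/
def dsc (t : ℕ → W) (i m : ℕ) : W := (((List.range m).map fun j => t (i + j)).reverse).prod

lemma asc_succ (t : ℕ → W) (i m : ℕ) : asc t i (m + 1) = asc t i m * t (i + m) := by
  simp [asc, List.range_succ]

lemma asc_succ' (t : ℕ → W) (i m : ℕ) : asc t i (m + 1) = t i * asc t (i + 1) m := by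
  have hfe : ((fun j => t (i + j)) ∘ Nat.succ) = fun j => t (i + 1 + j) := by
    funext j; simp only [Function.comp]; congr 1; omega
  simp only [asc, List.range_succ_eq_map, List.map_cons, List.map_map, List.prod_cons,
    add_zero, hfe]

lemma dsc_succ (t : ℕ → W) (i m : ℕ) : dsc t i (m + 1) = t (i + m) * dsc t i m := by
  simp [dsc, List.range_succ]

lemma dsc_succ' (t : ℕ → W) (i m : ℕ) : dsc t i (m + 1) = dsc t (i + 1) m * t i := by
  have hfe : ((fun j => t (i + j)) ∘ Nat.succ) = fun j => t (i + 1 + j) := by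
    funext j; simp only [Function.comp]; congr 1; omega
  simp only [dsc, List.range_succ_eq_map, List.map_cons, List.map_map, List.reverse_cons,
    List.prod_append, List.prod_cons, List.prod_nil, add_zero, mul_one, hfe]

lemma asc_shift (t : ℕ → W) (i m : ℕ) : asc (fun k => t (k + 1)) i m = asc t (i + 1) m := by
  have hfe : (fun j => t (i + j + 1)) = fun j => t (i + 1 + j) := by
    funext j; congr 1; omega
  simp only [asc, hfe]

lemma dsc_shift (t : ℕ → W) (i m : ℕ) : dsc (fun k => t (k + 1)) i m = dsc t (i + 1) m := by
  have hfe : (fun j => t (i + j + 1)) = fun j => t (i + 1 + j) := by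
    funext j; congr 1; omega
  simp only [dsc, hfe]

lemma dsc_eq_desc (t : ℕ → W) (i m : ℕ) :
    dsc t i m = ((List.range m).map fun j => t (i + m - 1 - j)).prod := by
  induction m with
  | zero => simp [dsc]
  | succ m ih =>
    rw [dsc_succ, ih]
    conv_rhs => rw [List.range_succ_eq_map]
    have hfe : ((fun j => t (i + (m + 1) - 1 - j)) ∘ Nat.succ) =
        fun j => t (i + m - 1 - j) := by
      funext j; simp only [Function.comp]; congr 1; omega
    simp only [List.map_cons, List.map_map, List.prod_cons, hfe]
    congr 2

theorem flat_prod {M α β : Type*} [Monoid M] (f : α → β) (g : β → M) (l : List α) :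
    (List.map g (l.flatMap fun a => [f a])).prod = (List.map (fun a => g (f a)) l).prod := by
  induction l with
  | nil => rfl
  | cons x l ih =>
    rw [List.flatMap_cons, List.singleton_append, List.map_cons, List.prod_cons, ih,
      List.map_cons, List.prod_cons]

/-- From `(ab)^3 = 1` and `a,b` involutions, the braid relation. -/
lemma braid_of_cube {a b : W} (ha : a * a = 1) (hb : b * b = 1)
    (h : (a * b) ^ 3 = 1) : a * b * a = b * a * b := by
  have hia : a⁻¹ = a := inv_eq_of_mul_eq_one_right ha
  have hib : b⁻¹ = b := inv_eq_of_mul_eq_one_right hb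
  have h3 := h
  rw [pow_succ, pow_two] at h3
  have hX : (a * b) * (a * b) = b * a := by
    have := eq_inv_of_mul_eq_one_left h3
    rw [mul_inv_rev, hia, hib] at this
    exact this
  have h4 : b * (a * b) = a * (b * a) := by
    have := congrArg (fun x => a * x) hX
    simpa only [← mul_assoc, ha, one_mul] using this
  simp only [mul_assoc]
  exact h4.symm

/-- From `(ab)^2 = 1` and `a,b` involutions, commutation. -/
lemma comm_of_square {a b : W} (ha : a * a = 1) (hb : b * b = 1)
    (h : (a * b) ^ 2 = 1) : a * b = b * a := by
  have hia : a⁻¹ = a := inv_eq_of_mul_eq_one_right ha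
  have hib : b⁻¹ = b := inv_eq_of_mul_eq_one_right hb
  have h2 : (a * b) * (a * b) = 1 := by rw [← h, pow_two]
  have := eq_inv_of_mul_eq_one_left h2
  rw [mul_inv_rev, hia, hib] at this
  exact this

/-- The key conjugation identity in a cycle group. -/
lemma key_conj (t : ℕ → W) (d : ℕ) (hd : 3 ≤ d)
    (hinv : ∀ k, t k * t k = 1)
    (hbr : ∀ k, t k * t (k + 1) * t k = t (k + 1) * t k * t (k + 1))
    (hcomm : ∀ j, 2 ≤ j → j ≤ d - 2 → t 0 * t j = t j * t 0)
    (hper : t d = t 0) :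
    asc t 1 d * dsc t 2 (d - 2) =
      t 0 * t 1 * (asc t 0 d * dsc t 1 (d - 2)) * (t 1 * t 0) := by
  obtain ⟨e, rfl⟩ : ∃ e, d = e + 3 := ⟨d - 3, by omega⟩
  have h2 : e + 3 - 2 = e + 1 := by omega
  rw [h2]
  have hA1 : asc t 1 (e + 3) = t 1 * (asc t 2 e * (t (2 + e) * t 0)) := by
    rw [show e + 3 = (e + 2) + 1 from rfl, asc_succ', show e + 2 = (e + 1) + 1 from rfl,
      asc_succ, asc_succ]
    rw [show (2 + (e + 1)) = (e + 3) from by omega, hper]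
    simp [mul_assoc]
  have hA0 : asc t 0 (e + 3) = t 0 * (t 1 * (asc t 2 e * t (2 + e))) := by
    rw [show e + 3 = (e + 2) + 1 from rfl, asc_succ', show e + 2 = (e + 1) + 1 from rfl,
      asc_succ', asc_succ]
  have hD2 : dsc t 2 (e + 1) = t (2 + e) * dsc t 2 e := dsc_succ t 2 e
  have hD1 : dsc t 1 (e + 1) = dsc t 2 e * t 1 := dsc_succ' t 1 e
  rw [hA1, hA0, hD2, hD1]
  have hcan : ∀ k (x : W), t k * (t k * x) = x := fun k x => by
    rw [← mul_assoc, hinv, one_mul]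
  have hbr0 : ∀ x : W, t 0 * (t 1 * (t 0 * x)) = t 1 * (t 0 * (t 1 * x)) := fun x => by
    have := congrArg (fun y => y * x) (hbr 0)
    simpa only [mul_assoc] using this
  have hbrT : ∀ x : W, t 0 * (t (2 + e) * (t 0 * x)) = t (2 + e) * (t 0 * (t (2 + e) * x)) := by
    intro x
    have hb := hbr (2 + e)
    rw [show 2 + e + 1 = e + 3 from by omega, hper] at hb
    have := congrArg (fun y => y * x) hb
    simpa only [mul_assoc] using this.symm
  have hcA : Commute (t 0) (asc t 2 e) := by
    apply Commute.list_prod_right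
    intro x hx
    simp only [List.mem_map, List.mem_range] at hx
    obtain ⟨j, hj, rfl⟩ := hx
    exact hcomm (2 + j) (by omega) (by omega)
  have hcD : Commute (t 0) (dsc t 2 e) := by
    apply Commute.list_prod_right
    intro x hx
    simp only [List.mem_reverse, List.mem_map, List.mem_range] at hx
    obtain ⟨j, hj, rfl⟩ := hx
    exact hcomm (2 + j) (by omega) (by omega)
  have hcAx : ∀ x : W, t 0 * (asc t 2 e * x) = asc t 2 e * (t 0 * x) := fun x => by
    rw [← mul_assoc, hcA.eq, mul_assoc]
  have hcD' : dsc t 2 e * t 0 = t 0 * dsc t 2 e := hcD.eq.symm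
  simp only [mul_assoc]
  rw [hcan 1, hcD', hbr0, hcan 1, hcAx, hbrT]

end Aux

/-- Lemma 4.1: let `Γ` be a diagram of finite type containing a chordless
cycle all of whose edge weights are `1`.  In any group with generators `s_1, …, s_n` subject to
relations (R1), (R2) and the single extra relation `r(i_a, i_{a+1})² = e` for one fixed `a`
(i.e. in any group whose elements `s i` satisfy these relations), the relation
`r(i_b, i_{b+1})² = e` holds for every `b`. -/
theorem cycle_relation_from_single_relation
    (B : Matrix (Fin n) (Fin n) ℤ)
    (hskew : IsSkewSymmetrizable B) (hft : IsFiniteType B)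
    {d : ℕ} (hd : 3 ≤ d) (v : ZMod d → Fin n) (hcyc : IsChordlessCycle B v)
    (hw : ∀ b : ZMod d, |B (v b) (v (b + 1)) * B (v (b + 1)) (v b)| = 1)
    {W : Type*} [Group W] (s : Fin n → W) (h1 : R1 s) (h2 : R2 B s)
    (a : ZMod d) (ha : cycleWord s v a ^ 2 = 1) :
    ∀ b : ZMod d, cycleWord s v b ^ 2 = 1 := by
  haveI : NeZero d := ⟨by omega⟩
  haveI : Fact (1 < d) := ⟨by omega⟩
  obtain ⟨hinj, hpos, hzero⟩ := hcyc
  have hs2 : ∀ i, s i * s i = 1 := fun i => by have := h1 i; rwa [pow_two] at this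
  -- braid relation for adjacent cycle vertices
  have hbraid : ∀ x : ZMod d,
      s (v x) * s (v (x + 1)) * s (v x) = s (v (x + 1)) * s (v x) * s (v (x + 1)) := by
    intro x
    have hxne : x ≠ x + 1 := by
      intro h
      exact one_ne_zero (left_eq_add.mp h)
    have hij : v x ≠ v (x + 1) := fun h => hxne (hinj h)
    have habs := hw x
    have hne0 : B (v x) (v (x + 1)) * B (v (x + 1)) (v x) ≠ 0 := by
      intro h0; rw [h0] at habs; simp at habs
    have hm : coxm B (v x) (v (x + 1)) = 3 := by
      rw [coxm, if_neg hne0, if_pos habs]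
    have h3 := h2 _ _ hij
    rw [hm] at h3
    exact braid_of_cube (hs2 _) (hs2 _) h3
  -- commutation for non-adjacent cycle vertices
  have hcm : ∀ x y : ZMod d, x ≠ y → y ≠ x + 1 → x ≠ y + 1 →
      s (v x) * s (v y) = s (v y) * s (v x) := by
    intro x y hxy hy1 hx1
    have hij : v x ≠ v y := fun h => hxy (hinj h)
    have hB : B (v x) (v y) = 0 := hzero x y hxy hy1 hx1
    have hm : coxm B (v x) (v y) = 2 := by
      rw [coxm, if_pos (by rw [hB, zero_mul])]
    have h4 := h2 _ _ hij
    rw [hm] at h4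
    exact comm_of_square (hs2 _) (hs2 _) h4
  -- cycleWord in asc/dsc form
  have hcw : ∀ c : ZMod d, cycleWord s v c =
      asc (fun k : ℕ => s (v (c + (k : ZMod d)))) 0 d *
        dsc (fun k : ℕ => s (v (c + (k : ZMod d)))) 1 (d - 2) := by
    intro c
    unfold cycleWord
    congr 1
    · have hfe0 : (fun j : ℕ => s (v (c + ((0 + j : ℕ) : ZMod d)))) =
          fun t : ℕ => s (v (c + (t : ZMod d))) := by
        funext j; rw [Nat.zero_add]
      unfold asc
      beta_reduce
      rw [hfe0]
      exact flat_prod (fun a : ℕ => (a : ZMod d)) (fun t => s (v (c + t))) (List.range d)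
    · rw [dsc_eq_desc]
      have hfe : (fun j : ℕ => s (v (c + ((1 + (d - 2) - 1 - j : ℕ) : ZMod d)))) =
          fun j : ℕ => s (v (c + ((d - 2 - j : ℕ) : ZMod d))) := by
        funext j
        have harith : 1 + (d - 2) - 1 - j = d - 2 - j := by omega
        rw [harith]
      rw [hfe]
  -- one-step propagation
  have step : ∀ c : ZMod d, cycleWord s v c ^ 2 = 1 → cycleWord s v (c + 1) ^ 2 = 1 := by
    intro c hc
    have hinvF : ∀ k : ℕ, s (v (c + (k : ZMod d))) * s (v (c + (k : ZMod d))) = 1 :=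
      fun k => hs2 _
    have hbrF : ∀ k : ℕ,
        s (v (c + (k : ZMod d))) * s (v (c + ((k + 1 : ℕ) : ZMod d))) * s (v (c + (k : ZMod d)))
          = s (v (c + ((k + 1 : ℕ) : ZMod d))) * s (v (c + (k : ZMod d)))
            * s (v (c + ((k + 1 : ℕ) : ZMod d))) := by
      intro k
      have hcast : c + ((k + 1 : ℕ) : ZMod d) = (c + (k : ZMod d)) + 1 := by
        push_cast; ring
      rw [hcast]
      exact hbraid (c + (k : ZMod d))
    have hcomF : ∀ j : ℕ, 2 ≤ j → j ≤ d - 2 →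
        s (v (c + ((0 : ℕ) : ZMod d))) * s (v (c + (j : ZMod d)))
          = s (v (c + (j : ZMod d))) * s (v (c + ((0 : ℕ) : ZMod d))) := by
      intro j hj2 hjd
      have hjlt : j < d := by omega
      have h0 : (j : ZMod d) ≠ 0 := by
        intro h
        have hmod := (ZMod.natCast_eq_natCast_iff j 0 d).mp (by simpa using h)
        have : j % d = 0 % d := hmod
        rw [Nat.mod_eq_of_lt hjlt, Nat.zero_mod] at this
        omega
      have h1' : (j : ZMod d) ≠ 1 := by
        intro h
        have hmod := (ZMod.natCast_eq_natCast_iff j 1 d).mp (by simpa using h)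
        have : j % d = 1 % d := hmod
        rw [Nat.mod_eq_of_lt hjlt, Nat.mod_eq_of_lt (by omega)] at this
        omega
      have hm1 : ((j : ZMod d) + 1 : ZMod d) ≠ 0 := by
        intro h
        have hcast : ((j + 1 : ℕ) : ZMod d) = ((0 : ℕ) : ZMod d) := by push_cast; simpa using h
        have hmod := (ZMod.natCast_eq_natCast_iff (j + 1) 0 d).mp hcast
        have : (j + 1) % d = 0 % d := hmod
        rw [Nat.mod_eq_of_lt (by omega), Nat.zero_mod] at this
        omega
      have hne1 : c ≠ c + (j : ZMod d) := by
        intro h; exact h0 (left_eq_add.mp h)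
      have hne2 : c + (j : ZMod d) ≠ c + 1 := by
        intro h; exact h1' (add_left_cancel h)
      have hne3 : c ≠ (c + (j : ZMod d)) + 1 := by
        intro h
        rw [add_assoc] at h
        exact hm1 (left_eq_add.mp h)
      have := hcm c (c + (j : ZMod d)) hne1 hne2 hne3
      simpa using this
    have hperF : s (v (c + ((d : ℕ) : ZMod d))) = s (v (c + ((0 : ℕ) : ZMod d))) := by
      simp [ZMod.natCast_self]
    have hkey := key_conj (fun k : ℕ => s (v (c + (k : ZMod d)))) d hd hinvF hbrF hcomF hperF
    beta_reduce at hkey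
    -- rewrite both cycleWords
    have hcw1 : cycleWord s v (c + 1) =
        asc (fun k : ℕ => s (v (c + (k : ZMod d)))) 1 d *
          dsc (fun k : ℕ => s (v (c + (k : ZMod d)))) 2 (d - 2) := by
      rw [hcw (c + 1)]
      have hsh : (fun k : ℕ => s (v ((c + 1) + (k : ZMod d)))) =
          fun k : ℕ => (fun m : ℕ => s (v (c + (m : ZMod d)))) (k + 1) := by
        funext k
        simp only []
        congr 2
        push_cast
        ring
      rw [hsh, asc_shift (fun m : ℕ => s (v (c + (m : ZMod d)))) 0 d,
        dsc_shift (fun m : ℕ => s (v (c + (m : ZMod d)))) 1 (d - 2)]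
    rw [pow_two] at hc ⊢
    rw [hcw c] at hc
    rw [hcw1, hkey]
    set t0 := s (v (c + ((0 : ℕ) : ZMod d))) with ht0
    set t1 := s (v (c + ((1 : ℕ) : ZMod d))) with ht1
    set X := asc (fun k : ℕ => s (v (c + (k : ZMod d)))) 0 d *
      dsc (fun k : ℕ => s (v (c + (k : ZMod d)))) 1 (d - 2) with hX
    have hcan0 : ∀ x : W, t0 * (t0 * x) = x := fun x => by
      rw [← mul_assoc, hinvF 0, one_mul]
    have hcan1 : ∀ x : W, t1 * (t1 * x) = x := fun x => by
      rw [← mul_assoc, hinvF 1, one_mul]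
    have hXx : ∀ x : W, X * (X * x) = x := fun x => by
      rw [← mul_assoc, hc, one_mul]
    simp only [mul_assoc]
    rw [hcan0, hcan1, hXx, hcan1]
    exact hinvF 0
  -- propagate around the cycle
  have all : ∀ k : ℕ, cycleWord s v (a + (k : ZMod d)) ^ 2 = 1 := by
    intro k
    induction k with
    | zero => simpa using ha
    | succ k ih =>
      have h := step (a + (k : ZMod d)) ih
      have hcast : a + ((k + 1 : ℕ) : ZMod d) = (a + (k : ZMod d)) + 1 := by
        push_cast; ring
      rw [hcast]
      exact h
  intro b
  have hb : a + (((b - a).val : ℕ) : ZMod d) = b := by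
    have hval : (((b - a).val : ℕ) : ZMod d) = b - a := ZMod.natCast_rightInverse (b - a)
    rw [hval]
    ring
  rw [← hb]
  exact all _

end ClusterReflection
end

section
/- Let Γ be a diagram of finite type on vertices 1,…,n containing a chordless cycle 0→1→⋯→(d−1)→0 with all edge weights equal to 1, and let W be any group with elements s_1,…,s_n satisfying relations (R1) and (R2) for Γ. Then, with r(a,a+1) := s_a s_{a+1} ⋯ s_{a+d−1} s_{a+d−2} ⋯ s_{a+1} (indices mod d), the identity r(d−1,0) = s_0 s_{d−1} r(0,1) s_{d−1} s_0 holds in W. -/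
namespace ClusterReflection

variable {n : ℕ}

/-!
Write `P = s_1 ⋯ s_{d-3}` and `P'` for its reverse. Reading the two words off the cycle gives
`r(d-1,0) = s_{d-1} (s_0 P) s_{d-2} (P' s_0)` and `r(0,1) = s_0 (P s_{d-2}) s_{d-1} (s_{d-2} P')`.
Since the cycle is chordless, (R2) with `m = 2` makes `s_{d-1}` commute with `P` and `P'`, and
the identity then only uses (R1) and the braid relations (R2) with `m = 3` along the two edges
`d-2 → d-1 → 0` of the cycle.
-/

section GroupIdentities

variable {G : Type*} [Group G]

theorem mul_mul_eq_of_sq_eq_one_of_mul_pow_three {x y : G}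
    (hx : x ^ 2 = 1) (hy : y ^ 2 = 1) (hxy : (x * y) ^ 3 = 1) :
    x * y * x = y * x * y := by
  have hx' : x⁻¹ = x := inv_eq_of_mul_eq_one_left (by rw [← sq, hx])
  have hy' : y⁻¹ = y := inv_eq_of_mul_eq_one_left (by rw [← sq, hy])
  calc x * y * x = (y * x * y)⁻¹ := eq_inv_of_mul_eq_one_left <| by
        rw [← hxy]; simp only [pow_succ, pow_zero, one_mul, mul_assoc]
    _ = y * x * y := by simp only [mul_inv_rev, hx', hy', mul_assoc]

theorem commute_of_sq_eq_one_of_mul_sq {x y : G}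
    (hx : x ^ 2 = 1) (hy : y ^ 2 = 1) (hxy : (x * y) ^ 2 = 1) : Commute x y := by
  have hx' : x⁻¹ = x := inv_eq_of_mul_eq_one_left (by rw [← sq, hx])
  have hy' : y⁻¹ = y := inv_eq_of_mul_eq_one_left (by rw [← sq, hy])
  calc x * y = (x * y)⁻¹ := eq_inv_of_mul_eq_one_left (by rw [← sq, hxy])
    _ = y * x := by rw [mul_inv_rev, hx', hy']

theorem eq_conj_of_braid_of_commute {a x c p q : G}
    (ha : a ^ 2 = 1) (hxa : x * a * x = a * x * a) (hca : c * a * c = a * c * a)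
    (hp : Commute a p) (hq : Commute a q) :
    a * (x * p) * c * (q * x) = x * a * (x * (p * c) * a * (c * q)) * a * x := by
  have haa : a * a = 1 := by rw [← sq, ha]
  symm
  calc x * a * (x * (p * c) * a * (c * q)) * a * x
      = x * a * x * p * (c * a * c) * q * a * x := by simp only [mul_assoc]
    _ = x * a * x * (p * a) * c * (a * q * a) * x := by rw [hca]; simp only [mul_assoc]
    _ = x * a * x * a * p * c * q * x := by
        rw [← hp.eq, hq.eq, mul_assoc q a a, haa, mul_one]; simp only [mul_assoc]
    _ = a * (x * p) * c * (q * x) := by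
        rw [hxa, mul_assoc (a * x) a a, haa, mul_one]; simp only [mul_assoc]

end GroupIdentities

theorem natCast_ne_natCast_of_lt {N i j : ℕ} (hi : i < N) (hj : j < N) (hij : i ≠ j) :
    (i : ZMod N) ≠ j := by
  rwa [Ne, ZMod.natCast_eq_natCast_iff', Nat.mod_eq_of_lt hi, Nat.mod_eq_of_lt hj]

section CycleWords

variable {W : Type*} [Group W] {B : Matrix (Fin n) (Fin n) ℤ} {s : Fin n → W}

theorem R2.braid_of_weight_eq_one (h2 : R2 B s) (h1 : R1 s) {i j : Fin n} (hij : i ≠ j)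
    (hw : |B i j * B j i| = 1) : s i * s j * s i = s j * s i * s j := by
  have hm : coxm B i j = 3 := by
    have h0 : B i j * B j i ≠ 0 := fun h => by simp [h] at hw
    simp [coxm, h0, hw]
  exact mul_mul_eq_of_sq_eq_one_of_mul_pow_three (h1 i) (h1 j) (hm ▸ h2 i j hij)

theorem R2.commute_of_eq_zero (h2 : R2 B s) (h1 : R1 s) {i j : Fin n} (hij : i ≠ j)
    (hB : B i j = 0) : Commute (s i) (s j) := by
  have hm : coxm B i j = 2 := by simp [coxm, hB]
  exact commute_of_sq_eq_one_of_mul_sq (h1 i) (h1 j) (hm ▸ h2 i j hij)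

theorem cycleWord_eq_mul_reverse (s : Fin n → W) {d : ℕ} (hd : 2 ≤ d) (v : ZMod d → Fin n)
    (a : ZMod d) :
    cycleWord s v a =
      s (v a) * ((List.range (d - 2)).map fun t => s (v (a + (t + 1 : ℕ)))).prod *
        s (v (a - 1)) *
          ((List.range (d - 2)).map fun t => s (v (a + (t + 1 : ℕ)))).reverse.prod := by
  obtain ⟨m, rfl⟩ : ∃ m, d = m + 2 := ⟨d - 2, by omega⟩
  have hlast : a + ((m : ZMod (m + 2)) + 1) = a - 1 := by
    rw [sub_eq_add_neg, add_right_inj, eq_neg_iff_add_eq_zero, add_assoc, one_add_one_eq_two]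
    exact_mod_cast ZMod.natCast_self (m + 2)
  have hback : ((List.range m).map fun t => s (v (a + (t + 1 : ℕ)))).reverse =
      (List.range m).map fun t => s (v (a + (m - t : ℕ))) := by
    rw [← List.map_reverse, List.range_eq_range', List.reverse_range', List.map_map,
      ← List.range_eq_range']
    refine List.map_congr_left fun t ht => ?_
    rw [List.mem_range] at ht
    simp only [Function.comp_apply, show 0 + m - 1 - t + 1 = m - t by omega]
  rw [cycleWord, Nat.add_sub_cancel, hback]
  simp only [bind_pure_comp, List.map_eq_map, List.map_map]
  rw [List.range_succ, List.range_succ_eq_map]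
  simp [Function.comp_def, hlast, mul_assoc]

section LengthAtLeastThree

variable {e : ℕ} {v : ZMod (e + 3) → Fin n}

theorem neg_one_eq_natCast_add_two : (-1 : ZMod (e + 3)) = (e + 2 : ℕ) := by
  rw [eq_comm, ← sub_eq_zero, sub_neg_eq_add]
  exact_mod_cast ZMod.natCast_self (e + 3)

variable (s) in
theorem cycleWord_zero_eq :
    cycleWord s v 0 =
      s (v 0) * (((List.range e).map fun t => s (v (t + 1 : ℕ))).prod * s (v (e + 1 : ℕ))) *
        s (v (-1)) *
          (s (v (e + 1 : ℕ)) *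
            ((List.range e).map fun t => s (v (t + 1 : ℕ))).reverse.prod) := by
  rw [cycleWord_eq_mul_reverse s (by omega)]
  simp only [zero_add, zero_sub, show e + 3 - 2 = e + 1 by omega, List.range_succ,
    List.map_append, List.map_singleton, List.prod_append, List.reverse_append, List.prod_cons,
    List.prod_nil, mul_one, List.reverse_singleton, List.singleton_append]

variable (s) in
theorem cycleWord_neg_one_eq :
    cycleWord s v (-1) =
      s (v (-1)) * (s (v 0) * ((List.range e).map fun t => s (v (t + 1 : ℕ))).prod) *
        s (v (e + 1 : ℕ)) *
          (((List.range e).map fun t => s (v (t + 1 : ℕ))).reverse.prod * s (v 0)) := by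
  have hshift (t : ℕ) : (-1 : ZMod (e + 3)) + (t + 1 : ℕ) = t := by push_cast; ring
  have hprev : (-1 : ZMod (e + 3)) - 1 = (e + 1 : ℕ) := by
    rw [neg_one_eq_natCast_add_two]; push_cast; ring
  rw [cycleWord_eq_mul_reverse s (by omega)]
  simp only [hshift, hprev, show e + 3 - 2 = e + 1 by omega, List.range_succ_eq_map,
    List.map_cons, List.map_map, Function.comp_def, Nat.succ_eq_add_one, List.prod_cons,
    List.reverse_cons, List.prod_append, List.prod_nil, mul_one, Nat.cast_zero]

theorem IsChordlessCycle.commute_neg_one_of_mem (hcyc : IsChordlessCycle B v) (h1 : R1 s)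
    (h2 : R2 B s) {y : W} (hy : y ∈ (List.range e).map fun t => s (v (t + 1 : ℕ))) :
    Commute (s (v (-1))) y := by
  obtain ⟨t, ht, rfl⟩ := List.mem_map.1 hy
  rw [List.mem_range] at ht
  have hab : (-1 : ZMod (e + 3)) ≠ (t + 1 : ℕ) := by
    rw [neg_one_eq_natCast_add_two]
    exact natCast_ne_natCast_of_lt (by omega) (by omega) (by omega)
  refine h2.commute_of_eq_zero h1 (hcyc.1.ne hab) (hcyc.2.2 _ _ hab ?_ ?_)
  · rw [neg_add_cancel, ← Nat.cast_zero]
    exact natCast_ne_natCast_of_lt (by omega) (by omega) (by omega)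
  · rw [neg_one_eq_natCast_add_two, ← Nat.cast_succ]
    exact natCast_ne_natCast_of_lt (by omega) (by omega) (by omega)

end LengthAtLeastThree

end CycleWords

theorem cycle_word_conjugation_identity_general
    (B : Matrix (Fin n) (Fin n) ℤ)
    {d : ℕ} (hd : 3 ≤ d) (v : ZMod d → Fin n) (hcyc : IsChordlessCycle B v)
    (hw : ∀ b : ZMod d, |B (v b) (v (b + 1)) * B (v (b + 1)) (v b)| = 1)
    {W : Type*} [Group W] (s : Fin n → W) (h1 : R1 s) (h2 : R2 B s) :
    cycleWord s v (-1) =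
      s (v 0) * s (v (-1)) * cycleWord s v 0 * s (v (-1)) * s (v 0) := by
  obtain ⟨e, rfl⟩ : ∃ e, d = e + 3 := ⟨d - 3, by omega⟩
  have hne (a : ZMod (e + 3)) : v a ≠ v (a + 1) := hcyc.1.ne <| by
    have : Fact (1 < e + 3) := ⟨by omega⟩
    simp
  have hprev : ((e + 1 : ℕ) : ZMod (e + 3)) + 1 = -1 := by
    rw [neg_one_eq_natCast_add_two]; push_cast; ring
  rw [cycleWord_neg_one_eq, cycleWord_zero_eq]
  exact eq_conj_of_braid_of_commute (h1 _)
    (neg_add_cancel (1 : ZMod (e + 3)) ▸ h2.braid_of_weight_eq_one h1 (hne _) (hw _)).symm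
    (hprev ▸ h2.braid_of_weight_eq_one h1 (hne _) (hw _))
    (Commute.list_prod_right _ _ fun _ => hcyc.commute_neg_one_of_mem h1 h2)
    (Commute.list_prod_right _ _ fun _ hy =>
      hcyc.commute_neg_one_of_mem h1 h2 (List.mem_reverse.1 hy))

/-- identity from the proof of Lemma 4.1: for a chordless cycle
`v 0 → v 1 → ⋯ → v (d-1) → v 0` (vertices labelled by `ZMod d`, so that `v (-1) = v (d-1)`)
with all edge weights `1` in a diagram of finite type, and any group elements `s i` satisfying
(R1) and (R2), one has `r(d-1, 0) = s_0 s_{d-1} r(0,1) s_{d-1} s_0`. -/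
theorem cycle_word_conjugation_identity
    (B : Matrix (Fin n) (Fin n) ℤ)
    (hskew : IsSkewSymmetrizable B) (hft : IsFiniteType B)
    {d : ℕ} (hd : 3 ≤ d) (v : ZMod d → Fin n) (hcyc : IsChordlessCycle B v)
    (hw : ∀ b : ZMod d, |B (v b) (v (b + 1)) * B (v (b + 1)) (v b)| = 1)
    {W : Type*} [Group W] (s : Fin n → W) (h1 : R1 s) (h2 : R2 B s) :
    cycleWord s v (-1) =
      s (v 0) * s (v (-1)) * cycleWord s v 0 * s (v (-1)) * s (v 0) :=
  cycle_word_conjugation_identity_general B hd v hcyc hw s h1 h2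

end ClusterReflection
end

section
/- Let Γ be a diagram of finite type on vertices 1,…,n containing a chordless 3-cycle on vertices labelled 1, 2, 3 with arrows 1→2 of weight 2, 2→3 of weight 1, and 3→1 of weight 2. Let W be the group with generators s_1,…,s_n subject to relations (R1) and (R2) for Γ. Set r(1,2)=s_1s_2s_3s_2, r(2,3)=s_2s_3s_1s_3 and r(3,1)=s_3s_1s_2s_1. Then r(1,2)² = e holds in W if and only if r(2,3)² = e holds in W; moreover, if one of these holds, then r(3,1)³ = e. -/
namespace ClusterReflection

variable {n : ℕ}

private lemma tail2 {W : Type*} [Group W] {z : W} (h : z ^ 2 = 1) :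
    ∀ x : W, z * (z * x) = x := fun x => by
  rw [← mul_assoc, ← sq, h, one_mul]

private lemma tail3 {W : Type*} [Group W] {z : W} (h : z ^ 3 = 1) :
    ∀ x : W, z * (z * (z * x)) = x := fun x => by
  rw [← mul_assoc, ← mul_assoc,
    show z * z * z = 1 by rw [show z * z * z = z ^ 3 by rw [pow_succ, sq], h], one_mul]

private lemma tail4 {W : Type*} [Group W] {z : W} (h : z ^ 4 = 1) :
    ∀ x : W, z * (z * (z * (z * x))) = x := fun x => by
  rw [← mul_assoc, ← mul_assoc, ← mul_assoc,
    show z * z * z * z = 1 by rw [show z * z * z * z = z ^ 4 by rw [pow_succ, pow_succ, sq], h],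
    one_mul]

private lemma cycle_aux {W : Type*} [Group W] (a b c : W)
    (ha : a ^ 2 = 1) (hb : b ^ 2 = 1) (hc : c ^ 2 = 1)
    (hbc : (b * c) ^ 3 = 1) (hca : (c * a) ^ 4 = 1) :
    ((a * b * c * b) ^ 2 = 1 ↔ (b * c * a * c) ^ 2 = 1) ∧
    ((a * b * c * b) ^ 2 = 1 → (c * a * b * a) ^ 3 = 1) := by
  have cA : ∀ x : W, a*(a*x) = x := tail2 ha
  have cB : ∀ x : W, b*(b*x) = x := tail2 hb
  have cC : ∀ x : W, c*(c*x) = x := tail2 hc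
  have h6 : ∀ x : W, b*(c*(b*(c*(b*(c*x))))) = x := fun x => by
    simpa only [mul_assoc] using tail3 hbc x
  have h8 : ∀ x : W, c*(a*(c*(a*(c*(a*(c*(a*x))))))) = x := fun x => by
    simpa only [mul_assoc] using tail4 hca x
  have r3 : ∀ x : W, b*(c*(b*x)) = c*(b*(c*x)) := fun x => by
    conv_rhs => rw [← h6 (c*(b*(c*x))), cC (b*(c*x)), cB (c*x), cC x]
  have r2 : ∀ x : W, a*(c*(a*(c*x))) = c*(a*(c*(a*x))) := fun x => by
    conv_lhs => rw [← h8 (a*(c*(a*(c*x)))), cA (c*(a*(c*x))), cC (a*(c*x)), cA (c*x), cC x]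
  have r4of : (a * b * c * b) ^ 2 = 1 → ∀ x : W, a*(c*(b*(c*x))) = c*(b*(c*(a*x))) := by
    intro hP
    have hP1 : ∀ x : W, a*(b*(c*(b*(a*(b*(c*(b*x))))))) = x := fun x => by
      simpa only [mul_assoc] using tail2 hP x
    have hP2 : ∀ x : W, a*(c*(b*(c*(a*(c*(b*(c*x))))))) = x := fun x => by
      conv_lhs => rw [← r3 (a*(c*(b*(c*x)))), ← r3 x]
      exact hP1 x
    intro x
    conv_rhs => rw [← hP2 (c*(b*(c*(a*x)))), cC (b*(c*(a*x))), cB (c*(a*x)), cC (a*x), cA x]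
  refine ⟨⟨fun hP => ?_, fun hQ => ?_⟩, fun hP => ?_⟩
  · -- forward direction
    have r4 := r4of hP
    have hQ1 : ∀ x : W, b*(c*(a*(c*(b*(c*(a*(c*x))))))) = x := fun x => by
      conv_lhs => rw [r4 (a*(c*x)), cC (b*(c*(a*(a*(c*x))))), cB (c*(a*(a*(c*x)))),
        cA (c*x), cC x]
    simpa only [pow_succ, pow_zero, one_mul, mul_one, mul_assoc] using hQ1 1
  · -- backward direction
    have hQ1' : ∀ x : W, b*(c*(a*(c*(b*(c*(a*(c*x))))))) = x := fun x => by
      simpa only [mul_assoc] using tail2 hQ x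
    have r4b : ∀ x : W, b*(c*(a*(c*x))) = c*(a*(c*(b*x))) := fun x => by
      conv_rhs => rw [← hQ1' (c*(a*(c*(b*x)))), cC (a*(c*(b*x))), cA (c*(b*x)), cC (b*x), cB x]
    have hP1' : ∀ x : W, a*(b*(c*(b*(a*(b*(c*(b*x))))))) = x := fun x => by
      conv_lhs => rw [r3 (a*(b*(c*(b*x)))), r3 x, r4b (b*(c*x)), cC (a*(c*(b*(b*(c*x))))),
        cA (c*(b*(b*(c*x)))), cB (c*x), cC x]
    simpa only [pow_succ, pow_zero, one_mul, mul_one, mul_assoc] using hP1' 1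
  · -- the third relation
    have r4 := r4of hP
    have hZ : ∀ x : W, c*(a*(b*(a*(c*(a*(b*(a*(c*(a*(b*(a*x))))))))))) = x := fun x => by
      conv_lhs => rw [← cA (c*(a*(b*(a*(c*(a*(b*(a*(c*(a*(b*(a*x)))))))))))),
          ← cC (a*(c*(a*(b*(a*(c*(a*(b*(a*(c*(a*(b*(a*x))))))))))))),
          ← r2 (b*(a*(c*(a*(b*(a*(c*(a*(b*(a*x)))))))))),
          ← cC (a*(c*(a*(b*(a*(c*(a*(b*(a*x))))))))),
          r4 (c*(a*(c*(a*(b*(a*(c*(a*(b*(a*x)))))))))),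
          r2 (a*(b*(a*(c*(a*(b*(a*x))))))),
          ← r3 (c*(a*(c*(a*(a*(b*(a*(c*(a*(b*(a*x))))))))))),
          r4 (b*(c*(a*(c*(a*(a*(b*(a*(c*(a*(b*(a*x)))))))))))),
          cC (b*(c*(a*(b*(c*(a*(c*(a*(a*(b*(a*(c*(a*(b*(a*x))))))))))))))),
          ← cC (b*(c*(a*(c*(a*(a*(b*(a*(c*(a*(b*(a*x)))))))))))),
          ← r4 (c*(a*(a*(b*(a*(c*(a*(b*(a*x))))))))),
          r2 (b*(c*(c*(a*(a*(b*(a*(c*(a*(b*(a*x))))))))))),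
          cC (a*(c*(a*(b*(c*(c*(a*(a*(b*(a*(c*(a*(b*(a*x)))))))))))))),
          cC (a*(a*(b*(a*(c*(a*(b*(a*x)))))))),
          cA (b*(a*(c*(a*(b*(a*x)))))),
          cB (a*(c*(a*(b*(a*x))))),
          cA (c*(a*(b*(a*x)))),
          cC (a*(b*(a*x))),
          cA (b*(a*x)),
          cB (a*x),
          cA x]
    simpa only [pow_succ, pow_zero, one_mul, mul_one, mul_assoc] using hZ 1

/-- Lemma 4.2: let `Γ` be a diagram of finite type containing a chordless
triangle `i₁ → i₂ → i₃ → i₁` with weights `2, 1, 2` (on the arrows `i₁ → i₂`, `i₂ → i₃`,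
`i₃ → i₁` respectively).  For any group elements `s i` satisfying (R1) and (R2),
with `r(1,2) = s₁s₂s₃s₂`, `r(2,3) = s₂s₃s₁s₃` and `r(3,1) = s₃s₁s₂s₁`,
we have `r(1,2)² = e ↔ r(2,3)² = e`, and if either holds then `r(3,1)³ = e`. -/
theorem three_cycle_symmetry
    (B : Matrix (Fin n) (Fin n) ℤ)
    (hskew : IsSkewSymmetrizable B) (hft : IsFiniteType B)
    (i₁ i₂ i₃ : Fin n) (h12 : i₁ ≠ i₂) (h23 : i₂ ≠ i₃) (h13 : i₁ ≠ i₃)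
    (ha12 : 0 < B i₁ i₂) (hw12 : |B i₁ i₂ * B i₂ i₁| = 2)
    (ha23 : 0 < B i₂ i₃) (hw23 : |B i₂ i₃ * B i₃ i₂| = 1)
    (ha31 : 0 < B i₃ i₁) (hw31 : |B i₃ i₁ * B i₁ i₃| = 2)
    {W : Type*} [Group W] (s : Fin n → W) (h1 : R1 s) (h2 : R2 B s) :
    ((s i₁ * s i₂ * s i₃ * s i₂) ^ 2 = 1 ↔ (s i₂ * s i₃ * s i₁ * s i₃) ^ 2 = 1) ∧
    ((s i₁ * s i₂ * s i₃ * s i₂) ^ 2 = 1 → (s i₃ * s i₁ * s i₂ * s i₁) ^ 3 = 1) := by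
  have hz23 : B i₂ i₃ * B i₃ i₂ ≠ 0 := fun h => by rw [h] at hw23; simp at hw23
  have hz31 : B i₃ i₁ * B i₁ i₃ ≠ 0 := fun h => by rw [h] at hw31; simp at hw31
  have hn31 : ¬ |B i₃ i₁ * B i₁ i₃| = 1 := by rw [hw31]; norm_num
  have e23 : coxm B i₂ i₃ = 3 := by unfold coxm; rw [if_neg hz23, if_pos hw23]
  have e31 : coxm B i₃ i₁ = 4 := by unfold coxm; rw [if_neg hz31, if_neg hn31, if_pos hw31]
  have hbc : (s i₂ * s i₃) ^ 3 = 1 := by rw [← e23]; exact h2 i₂ i₃ h23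
  have hca : (s i₃ * s i₁) ^ 4 = 1 := by rw [← e31]; exact h2 i₃ i₁ (Ne.symm h13)
  exact cycle_aux (s i₁) (s i₂) (s i₃) (h1 i₁) (h1 i₂) (h1 i₃) hbc hca


end ClusterReflection
end

section
/- Let Γ be a diagram of finite type on vertices 1,…,n containing a chordless 4-cycle on vertices labelled 1, 2, 3, 4 with arrows 1→2 of weight 1, 2→3 of weight 2, 3→4 of weight 1, and 4→1 of weight 2. Let W be the group with generators s_1,…,s_n subject to relations (R1) and (R2) for Γ. Set r(1,2)=s_1s_2s_3s_4s_3s_2, r(2,3)=s_2s_3s_4s_1s_4s_3, r(3,4)=s_3s_4s_1s_2s_1s_4 and r(4,1)=s_4s_1s_2s_3s_2s_1. Then r(1,2)² = e holds in W if and only if r(3,4)² = e holds in W; moreover, if one of these holds, then both r(2,3)³ = e and r(4,1)³ = e hold. -/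
namespace ClusterReflection

variable {n : ℕ}

private lemma aux {W : Type*} [Group W] (a b c d : W)
    (ha : a*a = 1) (hb : b*b = 1) (hc : c*c = 1) (hd : d*d = 1)
    (hab : (a*b)^3 = 1) (hcd : (c*d)^3 = 1) (hbc : (b*c)^4 = 1) (hda : (d*a)^4 = 1)
    (hac : (a*c)^2 = 1) (hbd : (b*d)^2 = 1)
    (h : (a*b*c*d*c*b)^2 = 1) :
    (c*d*a*b*a*d)^2 = 1 ∧ (b*c*d*a*d*c)^3 = 1 := by
  have ra : ∀ x : W, a * (a * x) = x := fun x => by rw [← mul_assoc, ha, one_mul]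
  have rb : ∀ x : W, b * (b * x) = x := fun x => by rw [← mul_assoc, hb, one_mul]
  have rc : ∀ x : W, c * (c * x) = x := fun x => by rw [← mul_assoc, hc, one_mul]
  have rd : ∀ x : W, d * (d * x) = x := fun x => by rw [← mul_assoc, hd, one_mul]
  have phab : ∀ x : W, a * (b * (a * (b * (a * (b * (x)))))) = x := fun x => by
    have e := congrArg (· * x) hab
    simp only [show (3:ℕ) = 2+1 from rfl, pow_succ, pow_two, pow_zero, one_mul, mul_assoc] at e
    exact e
  have phcd : ∀ x : W, c * (d * (c * (d * (c * (d * (x)))))) = x := fun x => by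
    have e := congrArg (· * x) hcd
    simp only [show (3:ℕ) = 2+1 from rfl, pow_succ, pow_two, pow_zero, one_mul, mul_assoc] at e
    exact e
  have phbc : ∀ x : W, b * (c * (b * (c * (b * (c * (b * (c * (x)))))))) = x := fun x => by
    have e := congrArg (· * x) hbc
    simp only [show (4:ℕ) = 2+1+1 from rfl, pow_succ, pow_two, pow_zero, one_mul, mul_assoc] at e
    exact e
  have phda : ∀ x : W, d * (a * (d * (a * (d * (a * (d * (a * (x)))))))) = x := fun x => by
    have e := congrArg (· * x) hda
    simp only [show (4:ℕ) = 2+1+1 from rfl, pow_succ, pow_two, pow_zero, one_mul, mul_assoc] at e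
    exact e
  have phac : ∀ x : W, a * (c * (a * (c * (x)))) = x := fun x => by
    have e := congrArg (· * x) hac
    simp only [pow_two, pow_zero, one_mul, mul_assoc] at e
    exact e
  have phbd : ∀ x : W, b * (d * (b * (d * (x)))) = x := fun x => by
    have e := congrArg (· * x) hbd
    simp only [pow_two, pow_zero, one_mul, mul_assoc] at e
    exact e
  have phH : ∀ x : W, a * (b * (c * (d * (c * (b * (a * (b * (c * (d * (c * (b * (x)))))))))))) = x := fun x => by
    have e := congrArg (· * x) h
    simp only [pow_two, pow_zero, one_mul, mul_assoc] at e
    exact e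
  have rab : ∀ x : W, a * (b * (a * (x))) = b * (a * (b * (x))) := fun x => by
    calc a * (b * (a * (x))) = a * (b * (a * (b * (a * (b * (b * (a * (b * (x))))))))) := by rw [rb (a * (b * (x))), ra (b * (x)), rb (x)]
      _ = b * (a * (b * (x))) := phab _
  have rcd : ∀ x : W, c * (d * (c * (x))) = d * (c * (d * (x))) := fun x => by
    calc c * (d * (c * (x))) = c * (d * (c * (d * (c * (d * (d * (c * (d * (x))))))))) := by rw [rd (c * (d * (x))), rc (d * (x)), rd (x)]
      _ = d * (c * (d * (x))) := phcd _
  have rbc : ∀ x : W, b * (c * (b * (c * (x)))) = c * (b * (c * (b * (x)))) := fun x => by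
    calc b * (c * (b * (c * (x)))) = b * (c * (b * (c * (b * (c * (b * (c * (c * (b * (c * (b * (x)))))))))))) := by rw [rc (b * (c * (b * (x)))), rb (c * (b * (x))), rc (b * (x)), rb (x)]
      _ = c * (b * (c * (b * (x)))) := phbc _
  have rda : ∀ x : W, d * (a * (d * (a * (x)))) = a * (d * (a * (d * (x)))) := fun x => by
    calc d * (a * (d * (a * (x)))) = d * (a * (d * (a * (d * (a * (d * (a * (a * (d * (a * (d * (x)))))))))))) := by rw [ra (d * (a * (d * (x)))), rd (a * (d * (x))), ra (d * (x)), rd (x)]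
      _ = a * (d * (a * (d * (x)))) := phda _
  have rac : ∀ x : W, a * (c * (x)) = c * (a * (x)) := fun x => by
    calc a * (c * (x)) = a * (c * (a * (c * (c * (a * (x)))))) := by rw [rc (a * (x)), ra (x)]
      _ = c * (a * (x)) := phac _
  have rbd : ∀ x : W, b * (d * (x)) = d * (b * (x)) := fun x => by
    calc b * (d * (x)) = b * (d * (b * (d * (d * (b * (x)))))) := by rw [rd (b * (x)), rb (x)]
      _ = d * (b * (x)) := phbd _
  have rH : ∀ x : W, a * (b * (c * (d * (c * (b * (x)))))) = b * (c * (d * (c * (b * (a * (x)))))) := fun x => by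
    calc a * (b * (c * (d * (c * (b * (x)))))) = a * (b * (c * (d * (c * (b * (a * (b * (c * (d * (c * (b * (b * (c * (d * (c * (b * (a * (x)))))))))))))))))) := by rw [rb (c * (d * (c * (b * (a * (x)))))), rc (d * (c * (b * (a * (x))))), rd (c * (b * (a * (x)))), rc (b * (a * (x))), rb (a * (x)), ra (x)]
      _ = b * (c * (d * (c * (b * (a * (x)))))) := phH _
  have rE2 : ∀ x : W, d * (a * (c * (b * (c * (a * (x)))))) = a * (c * (b * (c * (a * (d * (x)))))) := by
    intro x
    conv_lhs => rw [← rc (d * (a * (c * (b * (c * (a * (x))))))), ← rb (c * (d * (a * (c * (b * (c * (a * (x)))))))), rac (b * (c * (a * (x)))), ← rac (x), rab (c * (x)), ← rH (b * (c * (x))), ← rab (c * (d * (c * (b * (b * (c * (x))))))), rac (d * (c * (b * (b * (c * (x)))))), ← rac (b * (c * (a * (d * (c * (b * (b * (c * (x))))))))), rb (c * (x)), rc (x)]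
  have rKN : ∀ x : W, d * (a * (d * (a * (c * (b * (c * (a * (x)))))))) = d * (c * (b * (c * (a * (d * (x)))))) := by
    intro x
    conv_lhs => rw [rE2 (x), ra (c * (b * (c * (a * (d * (x))))))]
  have L1 : ∀ x : W, c * (b * (c * (a * (c * (b * (c * (a * (c * (b * (c * (a * (x)))))))))))) = x := by
    intro x
    conv_lhs => rw [← rac (c * (b * (c * (a * (c * (b * (c * (a * (x))))))))), rc (b * (c * (a * (c * (b * (c * (a * (x)))))))), ← rac (c * (b * (c * (a * (x))))), rc (b * (c * (a * (x)))), ← rab (a * (b * (c * (a * (x))))), ra (b * (c * (a * (x)))), rb (c * (a * (x))), ← rac (c * (a * (x))), rc (a * (x)), ra (x)]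
  have L4 : ∀ x : W, d * (c * (b * (c * (a * (d * (d * (c * (b * (c * (a * (d * (d * (c * (b * (c * (a * (d * (x)))))))))))))))))) = x := by
    intro x
    conv_lhs => rw [rd (c * (b * (c * (a * (d * (d * (c * (b * (c * (a * (d * (x)))))))))))), rd (c * (b * (c * (a * (d * (x)))))), L1 (d * (x)), rd (x)]
  have L5 : ∀ x : W, d * (a * (d * (a * (c * (b * (c * (a * (d * (a * (d * (a * (c * (b * (c * (a * (d * (a * (d * (a * (c * (b * (c * (a * (x)))))))))))))))))))))))) = x := by
    intro x
    conv_lhs => rw [rKN (d * (a * (d * (a * (c * (b * (c * (a * (d * (a * (d * (a * (c * (b * (c * (a * (x))))))))))))))))), rKN (d * (a * (d * (a * (c * (b * (c * (a * (x))))))))), rKN (x), L4 (x)]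
  have L6 : ∀ x : W, d * (a * (d * (c * (b * (c * (d * (a * (d * (c * (b * (c * (d * (a * (d * (c * (b * (c * (x)))))))))))))))))) = x := by
    intro x
    conv_lhs => rw [← ra (d * (a * (d * (c * (b * (c * (d * (a * (d * (c * (b * (c * (x))))))))))))), ← ra (d * (a * (d * (c * (b * (c * (x))))))), ← rda (c * (b * (c * (a * (a * (d * (a * (d * (c * (b * (c * (x)))))))))))), ← rda (c * (b * (c * (x)))), ← ra (d * (a * (d * (c * (b * (c * (a * (d * (a * (d * (a * (c * (b * (c * (a * (d * (a * (d * (a * (c * (b * (c * (x))))))))))))))))))))))), ← rda (c * (b * (c * (a * (d * (a * (d * (a * (c * (b * (c * (a * (d * (a * (d * (a * (c * (b * (c * (x)))))))))))))))))))), ← ra (x), L5 (a * (x)), ra (x)]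
  have g1 : ∀ x : W, c * (d * (a * (b * (a * (d * (c * (d * (a * (b * (a * (d * (x)))))))))))) = x := by
    intro x
    conv_lhs => rw [← rcd (a * (b * (a * (d * (x))))), rab (d * (x)), rab (c * (d * (c * (b * (a * (b * (d * (x)))))))), rH (a * (b * (d * (x)))), rb (c * (d * (c * (b * (a * (a * (b * (d * (x))))))))), ← rcd (c * (b * (a * (a * (b * (d * (x))))))), rc (b * (a * (a * (b * (d * (x)))))), ra (b * (d * (x))), rb (d * (x)), rd (x), rc (x)]
  have FIN : ∀ x : W, b * (c * (d * (a * (d * (c * (b * (c * (d * (a * (d * (c * (b * (c * (d * (a * (d * (c * (x)))))))))))))))))) = x := by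
    intro x
    conv_lhs => rw [← rb (x), ← rc (b * (x)), L6 (c * (b * (x))), rc (b * (x)), rb (x)]
  constructor
  · have E := g1 (1:W)
    simp only [mul_one] at E
    rw [pow_two]
    simpa only [mul_assoc] using E
  · have E := FIN (1:W)
    simp only [mul_one] at E
    rw [show (3:ℕ) = 2+1 from rfl, pow_succ, pow_two]
    simpa only [mul_assoc] using E

/-- Lemma 4.4: let `Γ` be a diagram of finite type containing a chordless
square `i₁ → i₂ → i₃ → i₄ → i₁` with weights `1, 2, 1, 2` (on the arrows `i₁ → i₂`, `i₂ → i₃`,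
`i₃ → i₄`, `i₄ → i₁` respectively).  For any group elements `s i` satisfying (R1) and (R2),
with `r(1,2) = s₁s₂s₃s₄s₃s₂`, `r(2,3) = s₂s₃s₄s₁s₄s₃`, `r(3,4) = s₃s₄s₁s₂s₁s₄` and
`r(4,1) = s₄s₁s₂s₃s₂s₁`, we have `r(1,2)² = e ↔ r(3,4)² = e`, and if either holds then both
`r(2,3)³ = e` and `r(4,1)³ = e`. -/
theorem four_cycle_symmetry
    (B : Matrix (Fin n) (Fin n) ℤ)
    (hskew : IsSkewSymmetrizable B) (hft : IsFiniteType B)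
    (i₁ i₂ i₃ i₄ : Fin n) (h12 : i₁ ≠ i₂) (h13 : i₁ ≠ i₃) (h14 : i₁ ≠ i₄)
    (h23 : i₂ ≠ i₃) (h24 : i₂ ≠ i₄) (h34 : i₃ ≠ i₄)
    (ha12 : 0 < B i₁ i₂) (hw12 : |B i₁ i₂ * B i₂ i₁| = 1)
    (ha23 : 0 < B i₂ i₃) (hw23 : |B i₂ i₃ * B i₃ i₂| = 2)
    (ha34 : 0 < B i₃ i₄) (hw34 : |B i₃ i₄ * B i₄ i₃| = 1)
    (ha41 : 0 < B i₄ i₁) (hw41 : |B i₄ i₁ * B i₁ i₄| = 2)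
    (hchord13 : B i₁ i₃ = 0) (hchord31 : B i₃ i₁ = 0)
    (hchord24 : B i₂ i₄ = 0) (hchord42 : B i₄ i₂ = 0)
    {W : Type*} [Group W] (s : Fin n → W) (h1 : R1 s) (h2 : R2 B s) :
    ((s i₁ * s i₂ * s i₃ * s i₄ * s i₃ * s i₂) ^ 2 = 1 ↔
      (s i₃ * s i₄ * s i₁ * s i₂ * s i₁ * s i₄) ^ 2 = 1) ∧
    ((s i₁ * s i₂ * s i₃ * s i₄ * s i₃ * s i₂) ^ 2 = 1 →
      (s i₂ * s i₃ * s i₄ * s i₁ * s i₄ * s i₃) ^ 3 = 1 ∧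
      (s i₄ * s i₁ * s i₂ * s i₃ * s i₂ * s i₁) ^ 3 = 1) := by
  have sq : ∀ i, s i * s i = 1 := fun i => by have := h1 i; rwa [pow_two] at this
  have hne1 : ∀ {x : ℤ}, |x| = 1 → x ≠ 0 := fun hx h0 => by rw [h0] at hx; simp at hx
  have hne2 : ∀ {x : ℤ}, |x| = 2 → x ≠ 0 := fun hx h0 => by rw [h0] at hx; simp at hx
  have hm12 : coxm B i₁ i₂ = 3 := by unfold coxm; rw [if_neg (hne1 hw12), if_pos hw12]
  have hm34 : coxm B i₃ i₄ = 3 := by unfold coxm; rw [if_neg (hne1 hw34), if_pos hw34]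
  have hm23 : coxm B i₂ i₃ = 4 := by
    unfold coxm; rw [if_neg (hne2 hw23), if_neg (by rw [hw23]; decide), if_pos hw23]
  have hm41 : coxm B i₄ i₁ = 4 := by
    unfold coxm; rw [if_neg (hne2 hw41), if_neg (by rw [hw41]; decide), if_pos hw41]
  have hm13 : coxm B i₁ i₃ = 2 := by unfold coxm; rw [if_pos (by rw [hchord13, zero_mul])]
  have hm31 : coxm B i₃ i₁ = 2 := by unfold coxm; rw [if_pos (by rw [hchord31, zero_mul])]
  have hm24 : coxm B i₂ i₄ = 2 := by unfold coxm; rw [if_pos (by rw [hchord24, zero_mul])]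
  have hm42 : coxm B i₄ i₂ = 2 := by unfold coxm; rw [if_pos (by rw [hchord42, zero_mul])]
  have p12 : (s i₁ * s i₂) ^ 3 = 1 := by have := h2 i₁ i₂ h12; rwa [hm12] at this
  have p34 : (s i₃ * s i₄) ^ 3 = 1 := by have := h2 i₃ i₄ h34; rwa [hm34] at this
  have p23 : (s i₂ * s i₃) ^ 4 = 1 := by have := h2 i₂ i₃ h23; rwa [hm23] at this
  have p41 : (s i₄ * s i₁) ^ 4 = 1 := by have := h2 i₄ i₁ (Ne.symm h14); rwa [hm41] at this
  have p13 : (s i₁ * s i₃) ^ 2 = 1 := by have := h2 i₁ i₃ h13; rwa [hm13] at this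
  have p24 : (s i₂ * s i₄) ^ 2 = 1 := by have := h2 i₂ i₄ h24; rwa [hm24] at this
  have p31 : (s i₃ * s i₁) ^ 2 = 1 := by have := h2 i₃ i₁ (Ne.symm h13); rwa [hm31] at this
  have p42 : (s i₄ * s i₂) ^ 2 = 1 := by have := h2 i₄ i₂ (Ne.symm h24); rwa [hm42] at this
  have A1 := fun hh => aux (s i₁) (s i₂) (s i₃) (s i₄) (sq i₁) (sq i₂) (sq i₃) (sq i₄)
    p12 p34 p23 p41 p13 p24 hh
  have A2 := fun hh => aux (s i₃) (s i₄) (s i₁) (s i₂) (sq i₃) (sq i₄) (sq i₁) (sq i₂)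
    p34 p12 p41 p23 p31 p42 hh
  exact ⟨⟨fun hh => (A1 hh).1, fun hh => (A2 hh).1⟩,
    fun hh => ⟨(A1 hh).2, (A2 (A1 hh).1).2⟩⟩


end ClusterReflection
end

section
/- Let Γ be a diagram of finite type on vertices 1,…,n, let Γ^op be the diagram obtained from Γ by reversing the orientations of all edges (keeping the weights), and let W be a group with elements s_1,…,s_n. Then the elements s_i satisfy relations (R1), (R2) and (R3) with respect to Γ if and only if they satisfy relations (R1), (R2) and (R3) with respect to Γ^op. -/
namespace ClusterReflection

variable {n : ℕ}

private lemma conj_pow_eq {W : Type*} [Group W] (g x : W) (k : ℕ) :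
    (g * x * g⁻¹) ^ k = g * x ^ k * g⁻¹ := by
  induction k with
  | zero => simp
  | succ k ih => rw [pow_succ, pow_succ, ih]; group

private lemma prod_rev_mul {W : Type*} [Group W] (f : ℕ → W)
    (hf : ∀ t, f t * f t = 1) :
    ∀ m : ℕ, (((List.range m).map f).prod) *
        (((List.range m).map fun t => f (m - 1 - t)).prod) = 1 := by
  intro m
  induction m with
  | zero => simp
  | succ m ih =>
    have h1 : ((List.range (m + 1)).map f).prod
        = ((List.range m).map f).prod * f m := by
      rw [List.range_succ]; simp
    have h2 : ((List.range (m + 1)).map fun t => f (m + 1 - 1 - t)).prod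
        = f m * ((List.range m).map fun t => f (m - 1 - t)).prod := by
      rw [List.range_succ_eq_map]
      simp only [List.map_cons, List.prod_cons, List.map_map, Nat.sub_zero,
        Nat.add_sub_cancel]
      congr 1
      refine congrArg List.prod (List.map_congr_left ?_)
      intro t _
      simp only [Function.comp_apply]
      congr 1
      omega
    rw [h1, h2, mul_assoc, ← mul_assoc (f m), hf m, one_mul, ih]

private lemma prod_inv_eq {W : Type*} [Group W] (m : ℕ) (f : ℕ → W)
    (hf : ∀ t, f t * f t = 1) :
    (((List.range m).map f).prod)⁻¹
      = ((List.range m).map fun t => f (m - 1 - t)).prod :=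
  inv_eq_of_mul_eq_one_right (prod_rev_mul f hf m)

private lemma cycleWord_eq {W : Type*} [Group W] (s : Fin n → W) {d : ℕ}
    (v : ZMod d → Fin n) (a : ZMod d) :
    cycleWord s v a
      = (((List.range d).map fun t : ℕ => s (v (a + (t : ZMod d)))).prod) *
        (((List.range (d - 2)).map
            fun t : ℕ => s (v (a + ((d - 2 - t : ℕ) : ZMod d)))).prod) := by
  unfold cycleWord
  simp only [bind_pure_comp, List.map_eq_map, List.map_map]
  rfl

private lemma key {W : Type*} [Group W] (B : Matrix (Fin n) (Fin n) ℤ)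
    (hskew : IsSkewSymmetrizable B) (s : Fin n → W)
    (h : R1 s ∧ R2 B s ∧ R3 B s) : R1 s ∧ R2 (-B) s ∧ R3 (-B) s := by
  obtain ⟨h1, h2, h3⟩ := h
  have hinv : ∀ i, s i * s i = 1 := fun i => by have := h1 i; rwa [pow_two] at this
  have hsign : ∀ i j, B i j < 0 → 0 < B j i := by
    obtain ⟨dd, hdp, hds⟩ := hskew
    intro i j hij
    nlinarith [hds i j, hdp i, hdp j]
  refine ⟨h1, ?_, ?_⟩
  · intro i j hij
    have hcox : coxm (-B) i j = coxm B i j := by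
      simp [coxm, Matrix.neg_apply, neg_mul_neg]
    rw [hcox]; exact h2 i j hij
  · intro d hd v hv a
    obtain ⟨hvinj, hvedge, hvchord⟩ := hv
    set v' : ZMod d → Fin n := fun x => v (-x) with hv'def
    have hedge : ∀ c : ZMod d, B (v c) (v (c + 1)) < 0 := by
      intro c
      have := hvedge c
      simp only [Matrix.neg_apply] at this
      linarith
    -- v' is a chordless cycle of B
    have hv' : IsChordlessCycle B v' := by
      refine ⟨?_, ?_, ?_⟩
      · intro x y hxy
        exact neg_injective (hvinj hxy)
      · intro c
        have h5 : B (v (-c - 1)) (v (-c)) < 0 := by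
          have := hedge (-c - 1)
          have e : -c - 1 + 1 = -c := by ring
          rwa [e] at this
        have h6 := hsign _ _ h5
        have e : -(c + 1) = -c - 1 := by ring
        simpa [hv'def, e] using h6
      · intro x y hxy hba hab
        have c1 : (-x : ZMod d) ≠ -y := fun hc => hxy (neg_injective hc)
        have c2 : (-y : ZMod d) ≠ -x + 1 := by
          intro hc; exact hab (by linear_combination hc)
        have c3 : (-x : ZMod d) ≠ -y + 1 := by
          intro hc; exact hba (by linear_combination hc)
        have := hvchord (-x) (-y) c1 c2 c3
        simp only [Matrix.neg_apply, neg_eq_zero] at this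
        simpa [hv'def] using this
    -- the exponents agree
    have hexp : cycleExp (-B) v a = cycleExp B v' (1 - a) := by
      unfold cycleExp
      classical
      refine if_congr ?_ rfl ?_
      · constructor
        · intro h c
          have hc := h (-c - 1)
          simp only [Matrix.neg_apply, neg_mul_neg] at hc
          have e : -c - 1 + 1 = -c := by ring
          rw [e] at hc
          have e2 : -(c + 1) = -c - 1 := by ring
          simp only [hv'def, e2]
          rw [mul_comm]
          exact hc
        · intro h c
          have hc := h (-c - 1)
          simp only [hv'def] at hc
          have e2 : -(-c - 1) = c + 1 := by ring
          have e3 : -(-c - 1 + 1) = c := by ring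
          rw [e2, e3] at hc
          simp only [Matrix.neg_apply, neg_mul_neg]
          rw [mul_comm]
          exact hc
      · simp only [Matrix.neg_apply, neg_mul_neg, hv'def]
        have e1 : -(1 - a - 1) = a := by ring
        have e2 : -(1 - a) = a - 1 := by ring
        rw [e1, e2, mul_comm]
    -- the word identity
    set P : W := ((List.range d).map fun t : ℕ => s (v (a + (t : ZMod d)))).prod with hP
    set Q : W := ((List.range (d - 2)).map
        fun t : ℕ => s (v (a + ((d - 2 - t : ℕ) : ZMod d)))).prod with hQ
    have hPQ : cycleWord s v a = P * Q := by rw [cycleWord_eq, hP, hQ]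
    have hP' : ((List.range d).map fun t : ℕ => s (v' (1 - a + (t : ZMod d)))).prod = P⁻¹ := by
      rw [hP, prod_inv_eq d _ (fun t => hinv _)]
      refine congrArg List.prod (List.map_congr_left ?_)
      intro t ht
      rw [List.mem_range] at ht
      have hc : ((d - 1 - t : ℕ) : ZMod d) = -1 - (t : ZMod d) := by
        rw [Nat.cast_sub (by omega : t ≤ d - 1), Nat.cast_sub (by omega : 1 ≤ d),
          ZMod.natCast_self]
        push_cast; ring
      simp only [hv'def]
      rw [hc]
      congr 2
      ring
    have hQ' : ((List.range (d - 2)).map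
        fun t : ℕ => s (v' (1 - a + ((d - 2 - t : ℕ) : ZMod d)))).prod = Q⁻¹ := by
      rw [hQ, prod_inv_eq (d - 2) _ (fun t => hinv _)]
      refine congrArg List.prod (List.map_congr_left ?_)
      intro t ht
      rw [List.mem_range] at ht
      have e1 : d - 2 - (d - 2 - 1 - t) = t + 1 := by omega
      have hc1 : ((d - 2 - t : ℕ) : ZMod d) = -2 - (t : ZMod d) := by
        rw [Nat.cast_sub (by omega : t ≤ d - 2), Nat.cast_sub (by omega : 2 ≤ d),
          ZMod.natCast_self]
        push_cast; ring
      simp only [hv'def]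
      rw [e1, hc1]
      push_cast
      congr 2
      ring
    have hcw' : cycleWord s v' (1 - a) = P⁻¹ * Q⁻¹ := by
      rw [cycleWord_eq, hP', hQ']
    have hword : cycleWord s v a = P * (cycleWord s v' (1 - a))⁻¹ * P⁻¹ := by
      rw [hcw', hPQ]; group
    rw [hexp, hword, conj_pow_eq, inv_pow, h3 d hd v' hv' (1 - a), inv_one, mul_one,
      mul_inv_cancel]


/-- Proposition 4.6: the opposite diagram `Γ^op` of the diagram of `B` is the
diagram of `-B` (all arrows reversed, same weights).  Elements `s i` of a group satisfy
(R1), (R2), (R3) with respect to `Γ` if and only if they satisfy (R1), (R2), (R3) with respect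
to `Γ^op`. -/
theorem relations_opposite_diagram
    (B : Matrix (Fin n) (Fin n) ℤ)
    (hskew : IsSkewSymmetrizable B) (hft : IsFiniteType B)
    {W : Type*} [Group W] (s : Fin n → W) :
    (R1 s ∧ R2 B s ∧ R3 B s) ↔ (R1 s ∧ R2 (-B) s ∧ R3 (-B) s) := by
  have hskew' : IsSkewSymmetrizable (-B) := by
    obtain ⟨dd, hp, hs2⟩ := hskew
    refine ⟨dd, hp, fun i j => ?_⟩
    have := hs2 i j
    simp only [Matrix.neg_apply, mul_neg]
    linarith
  constructor
  · exact key B hskew s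
  · intro h
    have := key (-B) hskew' s h
    rwa [neg_neg] at this


end ClusterReflection
end

section
/- Let Γ be a diagram of finite type on vertices 1,…,n, let k be a vertex, let Γ' = μ_k(Γ), and let m'_{ij} denote the values m_{ij} computed from Γ'. Let s_1,…,s_n be the defining generators of W_Γ and, for each vertex i, set t_i = s_k s_i s_k if Γ has an arrow from i to k (of any weight) and t_i = s_i otherwise. Then, for distinct vertices i, j: (a) if i = k or j = k then (t_i t_j)^{m'_{ij}} = e in W_Γ; (b) if at most one of i, j is connected to k by an edge of Γ, then (t_i t_j)^{m'_{ij}} = e in W_Γ. -/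
namespace ClusterReflection

variable {n : ℕ}

/-- The element `t_i ∈ W_Γ`: `t_i = s_k s_i s_k` if the diagram of `B` has an arrow `i → k`
(of any weight), i.e. `B_{ik} > 0`, and `t_i = s_i` otherwise. -/
def tGen (B : Matrix (Fin n) (Fin n) ℤ) (k i : Fin n) : PresentedGroup (diagramRels B) :=
  if 0 < B i k then PresentedGroup.of k * PresentedGroup.of i * PresentedGroup.of k
  else PresentedGroup.of i

/-!
If `B i k = 0` then `s_i` commutes with `s_k` (their exponent is `2`) and `t_i = s_i`, so
`t_i t_j` is `s_i s_j` or its conjugate `s_k (s_i s_j) s_k`; moreover mutation at `k` does not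
change the weight of the edge `i – j`, because `B k i = 0` as well by skew-symmetrisability.
Both in (a) and in (b) one of the two vertices is such an `i` (in (a) it is `k` itself, as
`B k k = 0`), up to exchanging `i` and `j`, which replaces `t_i t_j` by a conjugate.
-/

section GroupLemmas

variable {W : Type*} [Group W]

theorem mul_pow_eq_one_comm {a b : W} {m : ℕ} (h : (a * b) ^ m = 1) : (b * a) ^ m = 1 := by
  have h' := mul_pow_mul a b m
  rwa [h, one_mul, eq_comm, mul_eq_left] at h'

theorem conj_pow_eq_one_of_sq_eq_one {a x : W} {m : ℕ} (ha : a ^ 2 = 1) (hx : x ^ m = 1) :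
    (a * x * a) ^ m = 1 := by
  have ha' : a⁻¹ = a := inv_eq_of_mul_eq_one_right (by rwa [← sq])
  nth_rw 2 [← ha']
  rw [conj_pow, hx, mul_one, mul_inv_cancel]

theorem commute_of_sq_eq_one {a b : W} (ha : a ^ 2 = 1) (hb : b ^ 2 = 1)
    (hab : (a * b) ^ 2 = 1) : Commute a b := by
  have ha' : a⁻¹ = a := inv_eq_of_mul_eq_one_right (by rwa [← sq])
  have hb' : b⁻¹ = b := inv_eq_of_mul_eq_one_right (by rwa [← sq])
  have hab' : (a * b)⁻¹ = a * b := inv_eq_of_mul_eq_one_right (by rwa [← sq])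
  rw [Commute, SemiconjBy, ← hab', mul_inv_rev, ha', hb']

end GroupLemmas

namespace IsSkewSymmetrizable

variable {B : Matrix (Fin n) (Fin n) ℤ}

theorem apply_self_eq_zero (hB : IsSkewSymmetrizable B) (i : Fin n) : B i i = 0 := by
  obtain ⟨d, hd, hskew⟩ := hB
  have hii : d i * B i i = 0 := by linarith [hskew i i]
  exact (mul_eq_zero.mp hii).resolve_left (hd i).ne'

theorem apply_eq_zero_of_apply_eq_zero (hB : IsSkewSymmetrizable B) {i j : Fin n}
    (h : B i j = 0) : B j i = 0 := by
  obtain ⟨d, hd, hskew⟩ := hB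
  have hji : d j * B j i = 0 := by linarith [hskew i j, h ▸ mul_zero (d i)]
  exact (mul_eq_zero.mp hji).resolve_left (hd j).ne'

end IsSkewSymmetrizable

theorem coxm_comm (B : Matrix (Fin n) (Fin n) ℤ) (i j : Fin n) : coxm B i j = coxm B j i := by
  rw [coxm, coxm, mul_comm]

theorem coxm_eq_two_of_apply_eq_zero {B : Matrix (Fin n) (Fin n) ℤ} {i j : Fin n}
    (h : B i j = 0) : coxm B i j = 2 := by
  simp [coxm, h]

theorem coxm_congr {B C : Matrix (Fin n) (Fin n) ℤ} {i j : Fin n}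
    (h : B i j * B j i = C i j * C j i) : coxm B i j = coxm C i j := by
  rw [coxm, coxm, h]

theorem coxm_mutate_of_apply_eq_zero {B : Matrix (Fin n) (Fin n) ℤ}
    (hB : IsSkewSymmetrizable B) {i j k : Fin n} (hik : B i k = 0) :
    coxm (mutate k B) i j = coxm B i j := by
  refine (coxm_congr ?_).symm
  have hki := hB.apply_eq_zero_of_apply_eq_zero hik
  by_cases hk : i = k ∨ j = k
  · have hk' : j = k ∨ i = k := hk.symm
    simp only [mutate, Matrix.of_apply, if_pos hk, if_pos hk', neg_mul_neg]
  · have hk' : ¬(j = k ∨ i = k) := fun h => hk h.symm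
    simp [mutate, if_neg hk, if_neg hk', hik, hki]

theorem of_sq (B : Matrix (Fin n) (Fin n) ℤ) (i : Fin n) :
    (PresentedGroup.of i : DiagramGroup B) ^ 2 = 1 := by
  rw [PresentedGroup.of, ← map_pow]
  exact PresentedGroup.one_of_mem (Or.inl ⟨i, rfl⟩)

theorem of_mul_of_pow_coxm (B : Matrix (Fin n) (Fin n) ℤ) {i j : Fin n} (hij : i ≠ j) :
    (PresentedGroup.of i * PresentedGroup.of j : DiagramGroup B) ^ coxm B i j = 1 := by
  rw [PresentedGroup.of, PresentedGroup.of, ← map_mul, ← map_pow]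
  exact PresentedGroup.one_of_mem (Or.inr (Or.inl ⟨i, j, hij, rfl⟩))

theorem commute_of_apply_eq_zero (B : Matrix (Fin n) (Fin n) ℤ) {i k : Fin n}
    (hik : B i k = 0) :
    Commute (PresentedGroup.of i : DiagramGroup B) (PresentedGroup.of k) := by
  rcases eq_or_ne i k with rfl | hne
  · exact Commute.refl _
  · refine commute_of_sq_eq_one (of_sq B i) (of_sq B k) ?_
    simpa [coxm_eq_two_of_apply_eq_zero hik] using of_mul_of_pow_coxm B hne

theorem tGen_of_apply_eq_zero (B : Matrix (Fin n) (Fin n) ℤ) {i k : Fin n} (hik : B i k = 0) :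
    tGen B k i = PresentedGroup.of i := by
  simp [tGen, hik]

theorem tGen_mul_tGen_pow_coxm_mutate_of_apply_eq_zero {B : Matrix (Fin n) (Fin n) ℤ}
    (hB : IsSkewSymmetrizable B) {i j k : Fin n} (hij : i ≠ j) (hik : B i k = 0) :
    (tGen B k i * tGen B k j) ^ coxm (mutate k B) i j = 1 := by
  rw [coxm_mutate_of_apply_eq_zero hB hik, tGen_of_apply_eq_zero B hik, tGen]
  split_ifs
  · have hconj : (PresentedGroup.of i : DiagramGroup B) *
        (PresentedGroup.of k * PresentedGroup.of j * PresentedGroup.of k) =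
        PresentedGroup.of k * (PresentedGroup.of i * PresentedGroup.of j) *
          PresentedGroup.of k := by
      simp only [← mul_assoc, (commute_of_apply_eq_zero B hik).eq]
    rw [hconj]
    exact conj_pow_eq_one_of_sq_eq_one (of_sq B k) (of_mul_of_pow_coxm B hij)
  · exact of_mul_of_pow_coxm B hij

theorem mutated_generators_easy_relations_general
    (B : Matrix (Fin n) (Fin n) ℤ)
    (hskew : IsSkewSymmetrizable B) (k : Fin n) :
    ∀ i j : Fin n, i ≠ j →
      ((i = k ∨ j = k) →
        (tGen B k i * tGen B k j) ^ coxm (mutate k B) i j = 1) ∧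
      (¬(B i k ≠ 0 ∧ B j k ≠ 0) →
        (tGen B k i * tGen B k j) ^ coxm (mutate k B) i j = 1) := by
  intro i j hij
  have key : B i k = 0 ∨ B j k = 0 →
      (tGen B k i * tGen B k j) ^ coxm (mutate k B) i j = 1 := by
    rintro (hik | hjk)
    · exact tGen_mul_tGen_pow_coxm_mutate_of_apply_eq_zero hskew hij hik
    · rw [coxm_comm]
      exact mul_pow_eq_one_comm
        (tGen_mul_tGen_pow_coxm_mutate_of_apply_eq_zero hskew hij.symm hjk)
  refine ⟨fun hk => key ?_, fun hk => key (by tauto)⟩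
  rcases hk with rfl | rfl
  · exact Or.inl (hskew.apply_self_eq_zero i)
  · exact Or.inr (hskew.apply_self_eq_zero j)

/-- Lemma 5.1: let `Γ' = μ_k(Γ)` be the mutation at `k` of a diagram `Γ` of
finite type, with exponents `m'_{ij} = coxm (mutate k B) i j`.  Then for distinct vertices
`i, j`: (a) if `i = k` or `j = k`, then `(t_i t_j)^{m'_{ij}} = e` in `W_Γ`;
(b) if at most one of `i`, `j` is connected to `k` by an edge of `Γ`, then
`(t_i t_j)^{m'_{ij}} = e` in `W_Γ`. -/
theorem mutated_generators_easy_relations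
    (B : Matrix (Fin n) (Fin n) ℤ)
    (hskew : IsSkewSymmetrizable B) (hft : IsFiniteType B) (k : Fin n) :
    ∀ i j : Fin n, i ≠ j →
      ((i = k ∨ j = k) →
        (tGen B k i * tGen B k j) ^ coxm (mutate k B) i j = 1) ∧
      (¬(B i k ≠ 0 ∧ B j k ≠ 0) →
        (tGen B k i * tGen B k j) ^ coxm (mutate k B) i j = 1) :=
  mutated_generators_easy_relations_general B hskew k

end ClusterReflection
end

section
/- Let B be an exchange matrix of a cluster algebra of finite type Δ, let {β_1,…,β_n} be a companion basis for B, and fix 1 ≤ k ≤ n. Define β'_i = s_{β_k}(β_i) if B_{ik} > 0 (i.e. there is an arrow from i to k in Γ(B)), and β'_i = β_i otherwise. Then {β'_1,…,β'_n} is a companion basis for μ_k(B). -/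
namespace ClusterReflection

variable {n : ℕ}

open RealInnerProductSpace

/-- The pairing `(β, α^∨) = 2⟪β, α⟫/⟪α, α⟫` of a vector with the coroot of `α`. -/
noncomputable def pairing (β α : EuclideanSpace ℝ (Fin n)) : ℝ :=
  2 * ⟪β, α⟫ / ⟪α, α⟫

/-- The reflection `s_α(v) = v - (v, α^∨) α` in the root `α`. -/
noncomputable def reflRoot (α v : EuclideanSpace ℝ (Fin n)) : EuclideanSpace ℝ (Fin n) :=
  v - pairing v α • α

/-- `Φ` is a finite crystallographic root system of rank `n` in `ℝ^n`. -/
def IsRootSystem (Φ : Set (EuclideanSpace ℝ (Fin n))) : Prop :=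
  Φ.Finite ∧ (∀ α ∈ Φ, α ≠ 0) ∧ Submodule.span ℝ Φ = ⊤ ∧
  (∀ α ∈ Φ, ∀ t : ℝ, t • α ∈ Φ → t = 1 ∨ t = -1) ∧
  (∀ α ∈ Φ, ∀ β ∈ Φ, reflRoot α β ∈ Φ) ∧
  (∀ α ∈ Φ, ∀ β ∈ Φ, ∃ z : ℤ, pairing β α = z)

/-- `α` lists a base (system of simple roots) of the root system `Φ`. -/
def IsBase (Φ : Set (EuclideanSpace ℝ (Fin n)))
    (α : Fin n → EuclideanSpace ℝ (Fin n)) : Prop :=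
  (∀ i, α i ∈ Φ) ∧ LinearIndependent ℝ α ∧
  ∀ γ ∈ Φ, ∃ c : Fin n → ℤ, γ = ∑ i, (c i : ℝ) • α i ∧ ((∀ i, 0 ≤ c i) ∨ (∀ i, c i ≤ 0))

/-- The Cartan counterpart `A(B)` of a skew-symmetrisable matrix `B`. -/
def cartanCounterpart (B : Matrix (Fin n) (Fin n) ℤ) : Matrix (Fin n) (Fin n) ℤ :=
  Matrix.of fun i j => if i = j then 2 else -|B i j|

/-- `B` is an exchange matrix of the cluster algebra of finite type whose root system is `Φ`:
it is skew-symmetrisable of finite type and mutation-equivalent to a matrix whose Cartan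
counterpart is the Cartan matrix of the corresponding Dynkin diagram, i.e. the matrix of
pairings `(α_i, α_j^∨)` of a base of `Φ`. -/
def IsExchangeMatrix (Φ : Set (EuclideanSpace ℝ (Fin n)))
    (B : Matrix (Fin n) (Fin n) ℤ) : Prop :=
  IsSkewSymmetrizable B ∧ IsFiniteType B ∧
  ∃ B₀ : Matrix (Fin n) (Fin n) ℤ, Relation.ReflTransGen Mutation B B₀ ∧
    ∃ α : Fin n → EuclideanSpace ℝ (Fin n), IsBase Φ α ∧
      ∀ i j, (cartanCounterpart B₀ i j : ℝ) = pairing (α i) (α j)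

/-- `β` is a companion basis for `B`: a family of roots forming a `ℤ`-basis of the root
lattice `ℤΦ` with `|(β_i, β_j^∨)| = |B_{ij}|` for all `i ≠ j`. -/
def IsCompanionBasis (Φ : Set (EuclideanSpace ℝ (Fin n))) (B : Matrix (Fin n) (Fin n) ℤ)
    (β : Fin n → EuclideanSpace ℝ (Fin n)) : Prop :=
  (∀ i, β i ∈ Φ) ∧ LinearIndependent ℤ β ∧
  Submodule.span ℤ (Set.range β) = Submodule.span ℤ Φ ∧
  ∀ i j, i ≠ j → |pairing (β i) (β j)| = |(B i j : ℝ)|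

/-- The inward mutation `μ_k(𝓑)` of a companion basis: `β_i` is replaced by `s_{β_k}(β_i)`
whenever there is an arrow `i → k` in `Γ(B)` (i.e. `B_{ik} > 0`), and unchanged otherwise. -/
noncomputable def mutateBasis (B : Matrix (Fin n) (Fin n) ℤ) (k : Fin n)
    (β : Fin n → EuclideanSpace ℝ (Fin n)) : Fin n → EuclideanSpace ℝ (Fin n) :=
  fun i => if 0 < B i k then reflRoot (β k) (β i) else β i

/-! ### Auxiliary lemmas -/

lemma inner_self_pos'' {x : EuclideanSpace ℝ (Fin n)} (hx : x ≠ 0) : 0 < ⟪x, x⟫ :=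
  lt_of_le_of_ne real_inner_self_nonneg (fun h => hx (inner_self_eq_zero.mp h.symm))

lemma pairing_self {α : EuclideanSpace ℝ (Fin n)} (hα : α ≠ 0) : pairing α α = 2 := by
  unfold pairing
  rw [mul_div_assoc, div_self (ne_of_gt (inner_self_pos'' hα)), mul_one]

lemma pairing_neg_left (v w : EuclideanSpace ℝ (Fin n)) : pairing (-v) w = -pairing v w := by
  unfold pairing
  rw [inner_neg_left]
  ring

lemma pairing_reflRoot_left (α v w : EuclideanSpace ℝ (Fin n)) :
    pairing (reflRoot α v) w = pairing v w - pairing v α * pairing α w := by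
  unfold reflRoot pairing
  rw [inner_sub_left, real_inner_smul_left]
  ring

lemma inner_reflRoot_left (α v w : EuclideanSpace ℝ (Fin n)) :
    ⟪reflRoot α v, w⟫ = ⟪v, reflRoot α w⟫ := by
  simp only [reflRoot, pairing, inner_sub_left, inner_sub_right, real_inner_smul_left,
    real_inner_smul_right]
  rw [real_inner_comm α w]
  ring

lemma inner_reflRoot_reflRoot {α : EuclideanSpace ℝ (Fin n)} (hα : α ≠ 0)
    (v w : EuclideanSpace ℝ (Fin n)) :
    ⟪reflRoot α v, reflRoot α w⟫ = ⟪v, w⟫ := by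
  have hc : ⟪α, α⟫ ≠ 0 := ne_of_gt (inner_self_pos'' hα)
  simp only [reflRoot, pairing, inner_sub_left, inner_sub_right, real_inner_smul_left,
    real_inner_smul_right]
  rw [real_inner_comm α w, div_mul_cancel₀ _ hc]
  ring

lemma pairing_reflRoot_reflRoot {α : EuclideanSpace ℝ (Fin n)} (hα : α ≠ 0)
    (v w : EuclideanSpace ℝ (Fin n)) :
    pairing (reflRoot α v) (reflRoot α w) = pairing v w := by
  unfold pairing
  rw [inner_reflRoot_reflRoot hα, inner_reflRoot_reflRoot hα]

lemma pairing_reflRoot_right {α : EuclideanSpace ℝ (Fin n)} (hα : α ≠ 0)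
    (v w : EuclideanSpace ℝ (Fin n)) :
    pairing v (reflRoot α w) = pairing (reflRoot α v) w := by
  unfold pairing
  rw [inner_reflRoot_reflRoot hα, ← inner_reflRoot_left]

lemma reflRoot_self {α : EuclideanSpace ℝ (Fin n)} (hα : α ≠ 0) : reflRoot α α = -α := by
  unfold reflRoot
  rw [pairing_self hα, two_smul]
  abel

lemma skew_signs {B : Matrix (Fin n) (Fin n) ℤ} (h : IsSkewSymmetrizable B) (i j : Fin n) :
    (0 < B i j ↔ B j i < 0) ∧ (B i j = 0 ↔ B j i = 0) := by
  obtain ⟨d, hd, hdB⟩ := h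
  have hij := hdB i j
  have hi := hd i
  have hj := hd j
  refine ⟨⟨fun hh => ?_, fun hh => ?_⟩, ⟨fun hh => ?_, fun hh => ?_⟩⟩
  · nlinarith
  · nlinarith
  · have h0 : d j * B j i = 0 := by rw [hh, mul_zero] at hij; linarith
    exact (mul_eq_zero.mp h0).resolve_left (ne_of_gt hj)
  · have h0 : d i * B i j = 0 := by rw [hh, mul_zero, neg_zero] at hij; exact hij
    exact (mul_eq_zero.mp h0).resolve_left (ne_of_gt hi)

lemma diag_zero {B : Matrix (Fin n) (Fin n) ℤ} (h : IsSkewSymmetrizable B) (k : Fin n) :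
    B k k = 0 := by
  obtain ⟨d, hd, hdB⟩ := h
  have h1 := hdB k k
  have h0 : d k * B k k = 0 := by linarith
  exact (mul_eq_zero.mp h0).resolve_left (ne_of_gt (hd k))

lemma triangle_oriented {B : Matrix (Fin n) (Fin n) ℤ} (hs : IsSkewSymmetrizable B)
    (hf : IsFiniteType B) {a b c : Fin n} (hab : a ≠ b) (hbc : b ≠ c) (hac : a ≠ c)
    (h1 : 0 < B a b) (h2 : 0 < B b c) : ¬ 0 < B a c := by
  intro h3
  have hba : B b a < 0 := (skew_signs hs a b).1.mp h1
  have hcb : B c b < 0 := (skew_signs hs b c).1.mp h2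
  have hca : B c a < 0 := (skew_signs hs a c).1.mp h3
  have hfin := hf (mutate b B) (Relation.ReflTransGen.single ⟨b, rfl⟩) a c
  have e1 : (mutate b B) a c = B a c + B a b * B b c := by
    simp only [mutate, Matrix.of_apply]
    rw [if_neg (by push_neg; exact ⟨hab, hbc.symm⟩)]
    have hn : |B a b| * B b c + B a b * |B b c| = 2 * (B a b * B b c) := by
      rw [abs_of_pos h1, abs_of_pos h2]; ring
    rw [hn, Int.mul_ediv_cancel_left _ (by norm_num)]
  have e2 : (mutate b B) c a = B c a - B c b * B b a := by
    simp only [mutate, Matrix.of_apply]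
    rw [if_neg (by push_neg; exact ⟨hbc.symm, hab⟩)]
    have hn : |B c b| * B b a + B c b * |B b a| = 2 * (-(B c b * B b a)) := by
      rw [abs_of_neg hcb, abs_of_neg hba]; ring
    rw [hn, Int.mul_ediv_cancel_left _ (by norm_num)]
    ring
  rw [e1, e2] at hfin
  have hX : 2 ≤ B a c + B a b * B b c := by nlinarith
  have hY : B c a - B c b * B b a ≤ -2 := by nlinarith
  have hprod : (B a c + B a b * B b c) * (B c a - B c b * B b a) ≤ -4 := by nlinarith
  have := (abs_le.mp hfin).1
  linarith

lemma abs_helper {x y A C : ℝ} (hxy : 0 ≤ x * y) (h1 : |x| = |A|) (h2 : |y| = |C|)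
    (hAC : A * C ≤ 0) : |x - y| = |A + C| := by
  rw [← sq_eq_sq_iff_abs_eq_abs]
  have hx2 : x ^ 2 = A ^ 2 := by rw [← sq_abs x, ← sq_abs A, h1]
  have hy2 : y ^ 2 = C ^ 2 := by rw [← sq_abs y, ← sq_abs C, h2]
  have hxy' : x * y = -(A * C) := by
    have h3 : |x * y| = |A * C| := by rw [abs_mul, abs_mul, h1, h2]
    rw [abs_of_nonneg hxy, abs_of_nonpos hAC] at h3
    exact h3
  linear_combination hx2 + hy2 - 2 * hxy'

lemma gram_sign {u v w : EuclideanSpace ℝ (Fin n)}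
    (hli : LinearIndependent ℝ ![u, v, w])
    (h1 : ⟪u,u⟫ * ⟪v,v⟫ ≤ 4 * ⟪u,v⟫ ^ 2)
    (h2 : ⟪v,v⟫ * ⟪w,w⟫ ≤ 4 * ⟪v,w⟫ ^ 2)
    (h3 : ⟪u,u⟫ * ⟪w,w⟫ ≤ 4 * ⟪u,w⟫ ^ 2) :
    0 < ⟪u,v⟫ * ⟪v,w⟫ * ⟪u,w⟫ := by
  have hcomb : ∀ x y z : ℝ, x • u + y • v + z • w = 0 → x = 0 ∧ y = 0 ∧ z = 0 := by
    intro x y z hxyz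
    have h := linearIndependent_iff'.mp hli Finset.univ ![x, y, z]
      (by simpa [Fin.sum_univ_three] using hxyz)
    exact ⟨h 0 (Finset.mem_univ _), h 1 (Finset.mem_univ _), h 2 (Finset.mem_univ _)⟩
  have hu : u ≠ 0 := by have := hli.ne_zero 0; simpa using this
  have hv : v ≠ 0 := by have := hli.ne_zero 1; simpa using this
  have hw : w ≠ 0 := by have := hli.ne_zero 2; simpa using this
  have ha : 0 < ⟪u,u⟫ := inner_self_pos'' hu
  have hb : 0 < ⟪v,v⟫ := inner_self_pos'' hv
  have hc : 0 < ⟪w,w⟫ := inner_self_pos'' hw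
  -- 2x2 Gram nondegeneracy for (v, w)
  have hqne : ⟪v,v⟫ • w - ⟪v,w⟫ • v ≠ 0 := by
    intro h
    have h0 : (0:ℝ) • u + (-⟪v,w⟫) • v + ⟪v,v⟫ • w = 0 := by
      rw [zero_smul, zero_add, neg_smul, neg_add_eq_sub]
      exact h
    exact hb.ne' ((hcomb _ _ _ h0).2.2)
  have hq : 0 < ⟪⟪v,v⟫ • w - ⟪v,w⟫ • v, ⟪v,v⟫ • w - ⟪v,w⟫ • v⟫ := inner_self_pos'' hqne
  have hq2 : ⟪⟪v,v⟫ • w - ⟪v,w⟫ • v, ⟪v,v⟫ • w - ⟪v,w⟫ • v⟫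
      = ⟪v,v⟫ * (⟪v,v⟫ * ⟪w,w⟫ - ⟪v,w⟫ ^ 2) := by
    simp only [inner_sub_left, inner_sub_right, real_inner_smul_left, real_inner_smul_right]
    rw [real_inner_comm w v]
    ring
  have hbc : 0 < ⟪v,v⟫ * ⟪w,w⟫ - ⟪v,w⟫ ^ 2 := by nlinarith [hq, hq2]
  -- the cofactor vector p
  set p := (⟪v,v⟫ * ⟪w,w⟫ - ⟪v,w⟫ ^ 2) • u + (⟪v,w⟫ * ⟪u,w⟫ - ⟪w,w⟫ * ⟪u,v⟫) • v
    + (⟪u,v⟫ * ⟪v,w⟫ - ⟪v,v⟫ * ⟪u,w⟫) • w with hp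
  have hpne : p ≠ 0 := by
    intro h
    rw [hp] at h
    exact hbc.ne' ((hcomb _ _ _ h).1)
  have hppos : 0 < ⟪p, p⟫ := inner_self_pos'' hpne
  have hppval : ⟪p, p⟫ = (⟪v,v⟫ * ⟪w,w⟫ - ⟪v,w⟫ ^ 2) *
      (⟪u,u⟫ * ⟪v,v⟫ * ⟪w,w⟫ + 2 * (⟪u,v⟫ * ⟪v,w⟫ * ⟪u,w⟫)
        - ⟪u,u⟫ * ⟪v,w⟫ ^ 2 - ⟪v,v⟫ * ⟪u,w⟫ ^ 2 - ⟪w,w⟫ * ⟪u,v⟫ ^ 2) := by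
    rw [hp]
    simp only [inner_add_left, inner_add_right, inner_sub_left, inner_sub_right,
      real_inner_smul_left, real_inner_smul_right]
    rw [real_inner_comm v u, real_inner_comm w u, real_inner_comm w v]
    ring
  have hdet : 0 < ⟪u,u⟫ * ⟪v,v⟫ * ⟪w,w⟫ + 2 * (⟪u,v⟫ * ⟪v,w⟫ * ⟪u,w⟫)
      - ⟪u,u⟫ * ⟪v,w⟫ ^ 2 - ⟪v,v⟫ * ⟪u,w⟫ ^ 2 - ⟪w,w⟫ * ⟪u,v⟫ ^ 2 := by
    rw [hppval] at hppos
    rcases mul_pos_iff.mp hppos with ⟨_, h⟩ | ⟨h, _⟩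
    · exact h
    · linarith
  -- now the sign argument
  by_contra hcon
  push_neg at hcon
  have habc : 0 < ⟪u,u⟫ * ⟪v,v⟫ * ⟪w,w⟫ := by positivity
  have s1 : ⟪u,u⟫ * (⟪v,v⟫ * ⟪w,w⟫) ≤ ⟪u,u⟫ * (4 * ⟪v,w⟫ ^ 2) :=
    mul_le_mul_of_nonneg_left h2 ha.le
  have s2 : ⟪v,v⟫ * (⟪u,u⟫ * ⟪w,w⟫) ≤ ⟪v,v⟫ * (4 * ⟪u,w⟫ ^ 2) :=
    mul_le_mul_of_nonneg_left h3 hb.le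
  have s3 : ⟪w,w⟫ * (⟪u,u⟫ * ⟪v,v⟫) ≤ ⟪w,w⟫ * (4 * ⟪u,v⟫ ^ 2) :=
    mul_le_mul_of_nonneg_left h1 hc.le
  have t1 : (⟪u,u⟫ * ⟪v,v⟫) * (⟪v,v⟫ * ⟪w,w⟫) ≤ (4 * ⟪u,v⟫ ^ 2) * (4 * ⟪v,w⟫ ^ 2) :=
    mul_le_mul h1 h2 (by positivity) (by positivity)
  have t2 : ((⟪u,u⟫ * ⟪v,v⟫) * (⟪v,v⟫ * ⟪w,w⟫)) * (⟪u,u⟫ * ⟪w,w⟫)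
      ≤ ((4 * ⟪u,v⟫ ^ 2) * (4 * ⟪v,w⟫ ^ 2)) * (4 * ⟪u,w⟫ ^ 2) :=
    mul_le_mul t1 h3 (by positivity) (by positivity)
  have hsq : (⟪u,u⟫ * ⟪v,v⟫ * ⟪w,w⟫) ^ 2 ≤ 64 * (⟪u,v⟫ * ⟪v,w⟫ * ⟪u,w⟫) ^ 2 := by nlinarith [t2]
  have hS1 : 0 < ⟪u,u⟫ * ⟪v,v⟫ * ⟪w,w⟫ / 4 + 2 * (⟪u,v⟫ * ⟪v,w⟫ * ⟪u,w⟫) := by linarith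
  have hS2 : 0 < ⟪u,u⟫ * ⟪v,v⟫ * ⟪w,w⟫ / 4 - 2 * (⟪u,v⟫ * ⟪v,w⟫ * ⟪u,w⟫) := by linarith
  nlinarith [mul_pos hS1 hS2]

/-- Proposition 6.4: the inward mutation at `k` of a companion basis for an
exchange matrix `B` of a cluster algebra of finite type is a companion basis for `μ_k(B)`. -/
theorem mutation_of_companion_basis
    (Φ : Set (EuclideanSpace ℝ (Fin n))) (hΦ : IsRootSystem Φ)
    (B : Matrix (Fin n) (Fin n) ℤ) (hB : IsExchangeMatrix Φ B)
    (β : Fin n → EuclideanSpace ℝ (Fin n)) (hβ : IsCompanionBasis Φ B β)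
    (k : Fin n) :
    IsCompanionBasis Φ (mutate k B) (mutateBasis B k β) := by
  obtain ⟨hfinΦ, hne, hspanΦ, hred, hrefl, hcr⟩ := hΦ
  obtain ⟨hskew, hfin, -⟩ := hB
  obtain ⟨hmem, hliZ, hspan, hpair⟩ := hβ
  have hβne : ∀ i, β i ≠ 0 := fun i => hne _ (hmem i)
  have hkne : β k ≠ 0 := hβne k
  have hBkk : B k k = 0 := diag_zero hskew k
  have hsgn1 : ∀ a b, 0 < B a b ↔ B b a < 0 := fun a b => (skew_signs hskew a b).1
  have hsgn2 : ∀ a b, B a b = 0 ↔ B b a = 0 := fun a b => (skew_signs hskew a b).2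
  set β' := mutateBasis B k β with hβ'def
  have hβ'k : β' k = β k := by
    rw [hβ'def]; simp [mutateBasis, hBkk]
  have hβ'refl : ∀ i, 0 < B i k → β' i = reflRoot (β k) (β i) := by
    intro i h; rw [hβ'def]; simp [mutateBasis, h]
  have hβ'pos : ∀ i, 0 < B i k → β' i = β i - pairing (β i) (β k) • β k := by
    intro i h; rw [hβ'refl i h]; rfl
  have hβ'neg : ∀ i, ¬ 0 < B i k → β' i = β i := by
    intro i h; rw [hβ'def]; simp [mutateBasis, h]
  have hPz : ∀ a b : Fin n, ∃ s : ℤ, pairing (β a) (β b) = s :=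
    fun a b => hcr (β b) (hmem b) (β a) (hmem a)
  choose Z hZ using hPz
  -- real span and independence of β
  have hsubR : Φ ⊆ (Submodule.span ℝ (Set.range β) : Set (EuclideanSpace ℝ (Fin n))) := by
    intro x hx
    have hx1 : x ∈ Submodule.span ℤ (Set.range β) := by
      rw [hspan]; exact Submodule.subset_span hx
    have h2 : Submodule.span ℤ (Set.range β)
        ≤ Submodule.restrictScalars ℤ (Submodule.span ℝ (Set.range β)) :=
      Submodule.span_le.mpr (fun y hy => Submodule.subset_span hy)
    exact h2 hx1
  have htopβ : ⊤ ≤ Submodule.span ℝ (Set.range β) := by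
    rw [← hspanΦ]; exact Submodule.span_le.mpr hsubR
  have hliR : LinearIndependent ℝ β :=
    linearIndependent_of_top_le_span_of_card_eq_finrank htopβ
      (by simp [finrank_euclideanSpace_fin])
  have hsub' : ∀ i, β i ∈ Submodule.span ℝ (Set.range β') := by
    intro i
    by_cases h : 0 < B i k
    · have he : β i = β' i + pairing (β i) (β k) • β' k := by
        rw [hβ'k, hβ'pos i h]; abel
      rw [he]
      exact Submodule.add_mem _ (Submodule.subset_span ⟨i, rfl⟩)
        (Submodule.smul_mem _ _ (Submodule.subset_span ⟨k, rfl⟩))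
    · rw [← hβ'neg i h]; exact Submodule.subset_span ⟨i, rfl⟩
  have htopβ' : ⊤ ≤ Submodule.span ℝ (Set.range β') := by
    refine le_trans htopβ (Submodule.span_le.mpr ?_)
    rintro x ⟨i, rfl⟩; exact hsub' i
  have hliR' : LinearIndependent ℝ β' :=
    linearIndependent_of_top_le_span_of_card_eq_finrank htopβ'
      (by simp [finrank_euclideanSpace_fin])
  have hliZ' : LinearIndependent ℤ β' := by
    refine hliR'.restrict_scalars ?_
    intro a b hab
    have h1 : (a : ℝ) = b := by simpa using hab
    exact_mod_cast h1
  -- triple independence helper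
  have hli3 : ∀ a b c : Fin n, a ≠ b → b ≠ c → a ≠ c →
      LinearIndependent ℝ ![β a, β b, β c] := by
    intro a b c hab hbc hac
    have hinj : Function.Injective ![a, b, c] := by
      intro x y hxy
      fin_cases x <;> fin_cases y <;> simp_all
    have h := hliR.comp ![a, b, c] hinj
    have he : β ∘ ![a, b, c] = ![β a, β b, β c] := by
      ext x; fin_cases x <;> rfl
    rwa [he] at h
  -- the crystallographic Cauchy-Schwarz-type bound
  have hGpair : ∀ a b : Fin n, a ≠ b → B a b ≠ 0 →
      ⟪β a, β a⟫ * ⟪β b, β b⟫ ≤ 4 * ⟪β a, β b⟫ ^ 2 := by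
    intro a b hab hBab
    have hca : 0 < ⟪β a, β a⟫ := inner_self_pos'' (hβne a)
    have hcb : 0 < ⟪β b, β b⟫ := inner_self_pos'' (hβne b)
    have hz1ne : Z a b ≠ 0 := by
      intro h
      apply hBab
      have h1 := hpair a b hab
      rw [hZ a b, h] at h1
      simp at h1
      have h2 : (0:ℤ) = |B a b| := by exact_mod_cast h1
      exact abs_eq_zero.mp h2.symm
    have hBba : B b a ≠ 0 := fun h => hBab ((hsgn2 a b).mpr h)
    have hz2ne : Z b a ≠ 0 := by
      intro h
      apply hBba
      have h1 := hpair b a (Ne.symm hab)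
      rw [hZ b a, h] at h1
      simp at h1
      have h2 : (0:ℤ) = |B b a| := by exact_mod_cast h1
      exact abs_eq_zero.mp h2.symm
    have hkey : (Z a b : ℝ) * (Z b a : ℝ)
        = 4 * ⟪β a, β b⟫ ^ 2 / (⟪β a, β a⟫ * ⟪β b, β b⟫) := by
      rw [← hZ a b, ← hZ b a]
      unfold pairing
      rw [real_inner_comm (β b) (β a), div_mul_div_comm]
      congr 1
      · ring
      · ring
    have h0 : (0:ℤ) ≤ Z a b * Z b a := by
      have h0R : (0:ℝ) ≤ (Z a b : ℝ) * (Z b a : ℝ) := by rw [hkey]; positivity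
      exact_mod_cast h0R
    have h1 : (1:ℤ) ≤ Z a b * Z b a := by
      rcases h0.lt_or_eq with h | h
      · linarith
      · exact absurd h.symm (mul_ne_zero hz1ne hz2ne)
    have h1R : (1:ℝ) ≤ 4 * ⟪β a, β b⟫ ^ 2 / (⟪β a, β a⟫ * ⟪β b, β b⟫) := by
      rw [← hkey]; exact_mod_cast h1
    rw [le_div_iff₀ (by positivity)] at h1R
    linarith
  refine ⟨?_, hliZ', ?_, ?_⟩
  · -- membership in Φ
    intro i
    rw [hβ'def]
    simp only [mutateBasis]
    split_ifs
    · exact hrefl _ (hmem k) _ (hmem i)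
    · exact hmem i
  · -- integral span
    apply le_antisymm
    · apply Submodule.span_le.mpr
      rintro x ⟨i, rfl⟩
      by_cases h : 0 < B i k
      · rw [hβ'pos i h, hZ i k, Int.cast_smul_eq_zsmul ℝ]
        exact Submodule.sub_mem _ (Submodule.subset_span (hmem i))
          (Submodule.smul_mem _ _ (Submodule.subset_span (hmem k)))
      · rw [hβ'neg i h]; exact Submodule.subset_span (hmem i)
    · rw [← hspan]
      apply Submodule.span_le.mpr
      rintro x ⟨i, rfl⟩
      by_cases h : 0 < B i k
      · have he : β i = β' i + Z i k • β' k := by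
          rw [hβ'k, hβ'pos i h, hZ i k, Int.cast_smul_eq_zsmul ℝ]; abel
        rw [he]
        exact Submodule.add_mem _ (Submodule.subset_span ⟨i, rfl⟩)
          (Submodule.smul_mem _ _ (Submodule.subset_span ⟨k, rfl⟩))
      · rw [← hβ'neg i h]; exact Submodule.subset_span ⟨i, rfl⟩
  · -- the pairing condition
    intro i j hij
    rcases eq_or_ne j k with hjqk | hjk0
    · rw [hjqk] at hij ⊢
      have hent : (mutate k B) i k = -(B i k) := by simp [mutate]
      rw [hent, hβ'k]
      push_cast
      rw [abs_neg]
      by_cases h : 0 < B i k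
      · rw [hβ'refl i h, pairing_reflRoot_left, pairing_self hkne]
        have he : pairing (β i) (β k) - pairing (β i) (β k) * 2
            = -(pairing (β i) (β k)) := by ring
        rw [he, abs_neg]
        exact hpair i k hij
      · rw [hβ'neg i h]
        exact hpair i k hij
    rcases eq_or_ne i k with hiqk | hik0
    · rw [hiqk] at hij ⊢
      have hent : (mutate k B) k j = -(B k j) := by simp [mutate]
      rw [hent, hβ'k]
      push_cast
      rw [abs_neg]
      by_cases h : 0 < B j k
      · rw [hβ'refl j h, pairing_reflRoot_right hkne, reflRoot_self hkne,
          pairing_neg_left, abs_neg]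
        exact hpair k j hij
      · rw [hβ'neg j h]
        exact hpair k j hij
    -- main case : i ≠ k, j ≠ k, i ≠ j
    have hkjne : k ≠ j := Ne.symm hjk0
    have hent : (mutate k B) i j = B i j + (|B i k| * B k j + B i k * |B k j|) / 2 := by
      simp only [mutate, Matrix.of_apply]
      rw [if_neg (by push_neg; exact ⟨hik0, hjk0⟩)]
    by_cases hik : 0 < B i k
    · by_cases hjk : 0 < B j k
      · -- both reflected
        have hkj : B k j < 0 := (hsgn1 j k).mp hjk
        have hnum : |B i k| * B k j + B i k * |B k j| = 0 := by
          rw [abs_of_pos hik, abs_of_neg hkj]; ring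
        have hent' : (mutate k B) i j = B i j := by rw [hent, hnum]; simp
        rw [hent', hβ'refl i hik, hβ'refl j hjk, pairing_reflRoot_reflRoot hkne]
        exact hpair i j hij
      · -- i reflected, j fixed
        have hkj : 0 ≤ B k j := not_lt.mp (fun hlt => hjk ((hsgn1 j k).mpr hlt))
        have hnum : |B i k| * B k j + B i k * |B k j| = 2 * (B i k * B k j) := by
          rw [abs_of_pos hik, abs_of_nonneg hkj]; ring
        have hent' : (mutate k B) i j = B i j + B i k * B k j := by
          rw [hent, hnum, Int.mul_ediv_cancel_left _ (by norm_num : (2:ℤ) ≠ 0)]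
        rw [hent', hβ'refl i hik, hβ'neg j hjk, pairing_reflRoot_left]
        push_cast
        apply abs_helper
        · by_cases hkj0 : B k j = 0
          · have hp0 : pairing (β k) (β j) = 0 := by
              have h1 := hpair k j hkjne
              rw [hkj0] at h1
              simpa using h1
            rw [hp0, mul_zero, mul_zero]
          · by_cases hBij : B i j = 0
            · have hp0 : pairing (β i) (β j) = 0 := by
                have h1 := hpair i j hij
                rw [hBij] at h1
                simpa using h1
              rw [hp0, zero_mul]
            · have hXYZ : 0 < ⟪β i, β k⟫ * ⟪β k, β j⟫ * ⟪β i, β j⟫ :=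
                gram_sign (hli3 i k j hik0 hkjne hij)
                  (hGpair i k hik0 (ne_of_gt hik)) (hGpair k j hkjne hkj0)
                  (hGpair i j hij hBij)
              have hcj : 0 < ⟪β j, β j⟫ := inner_self_pos'' (hβne j)
              have hck : 0 < ⟪β k, β k⟫ := inner_self_pos'' (hβne k)
              have heq : pairing (β i) (β j) * (pairing (β i) (β k) * pairing (β k) (β j))
                  = 8 * (⟪β i, β k⟫ * ⟪β k, β j⟫ * ⟪β i, β j⟫)
                    / (⟪β j, β j⟫ * ⟪β j, β j⟫ * ⟪β k, β k⟫) := by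
                unfold pairing
                rw [div_mul_div_comm, div_mul_div_comm]
                congr 1
                · ring
                · ring
              rw [heq]
              exact le_of_lt (div_pos (by linarith) (by positivity))
        · exact hpair i j hij
        · rw [abs_mul, abs_mul, hpair i k hik0, hpair k j hkjne]
        · by_cases hkj0 : B k j = 0
          · rw [hkj0]; push_cast; simp
          · by_cases hBij : B i j = 0
            · rw [hBij]; push_cast; simp
            · have htri : ¬ 0 < B i j :=
                triangle_oriented hskew hfin hik0 hkjne hij hik
                  (lt_of_le_of_ne hkj (Ne.symm hkj0))
              have hA : (B i j : ℝ) < 0 := by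
                exact_mod_cast lt_of_le_of_ne (not_lt.mp htri) hBij
              have hC : 0 < (B i k : ℝ) * (B k j : ℝ) := by
                have h2 : 0 < B i k * B k j :=
                  mul_pos hik (lt_of_le_of_ne hkj (Ne.symm hkj0))
                exact_mod_cast h2
              exact le_of_lt (mul_neg_of_neg_of_pos hA hC)
    · by_cases hjk : 0 < B j k
      · -- i fixed, j reflected
        have hkj : B k j < 0 := (hsgn1 j k).mp hjk
        have hik' : B i k ≤ 0 := not_lt.mp hik
        have hnum : |B i k| * B k j + B i k * |B k j| = 2 * (-(B i k * B k j)) := by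
          rw [abs_of_nonpos hik', abs_of_neg hkj]; ring
        have hent' : (mutate k B) i j = B i j - B i k * B k j := by
          rw [hent, hnum, Int.mul_ediv_cancel_left _ (by norm_num : (2:ℤ) ≠ 0)]; ring
        rw [hent', hβ'neg i hik, hβ'refl j hjk, pairing_reflRoot_right hkne,
          pairing_reflRoot_left]
        push_cast
        conv_rhs => rw [sub_eq_add_neg]
        apply abs_helper
        · by_cases hik0' : B i k = 0
          · have hp0 : pairing (β i) (β k) = 0 := by
              have h1 := hpair i k hik0
              rw [hik0'] at h1
              simpa using h1
            rw [hp0, zero_mul, mul_zero]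
          · by_cases hBij : B i j = 0
            · have hp0 : pairing (β i) (β j) = 0 := by
                have h1 := hpair i j hij
                rw [hBij] at h1
                simpa using h1
              rw [hp0, zero_mul]
            · have hXYZ : 0 < ⟪β i, β k⟫ * ⟪β k, β j⟫ * ⟪β i, β j⟫ :=
                gram_sign (hli3 i k j hik0 hkjne hij)
                  (hGpair i k hik0 hik0') (hGpair k j hkjne (ne_of_lt hkj))
                  (hGpair i j hij hBij)
              have hcj : 0 < ⟪β j, β j⟫ := inner_self_pos'' (hβne j)
              have hck : 0 < ⟪β k, β k⟫ := inner_self_pos'' (hβne k)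
              have heq : pairing (β i) (β j) * (pairing (β i) (β k) * pairing (β k) (β j))
                  = 8 * (⟪β i, β k⟫ * ⟪β k, β j⟫ * ⟪β i, β j⟫)
                    / (⟪β j, β j⟫ * ⟪β j, β j⟫ * ⟪β k, β k⟫) := by
                unfold pairing
                rw [div_mul_div_comm, div_mul_div_comm]
                congr 1
                · ring
                · ring
              rw [heq]
              exact le_of_lt (div_pos (by linarith) (by positivity))
        · exact hpair i j hij
        · rw [abs_neg, abs_mul, abs_mul, hpair i k hik0, hpair k j hkjne]
        · by_cases hik0' : B i k = 0
          · rw [hik0']; push_cast; simp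
          · by_cases hBij : B i j = 0
            · rw [hBij]; push_cast; simp
            · have hki : 0 < B k i := by
                have h1 : B k i ≠ 0 := fun h => hik0' ((hsgn2 k i).mp h)
                have h2 : ¬ B k i < 0 := fun h => hik ((hsgn1 i k).mpr h)
                omega
              have htri : ¬ 0 < B j i :=
                triangle_oriented hskew hfin hjk0 (Ne.symm hik0) (Ne.symm hij) hjk hki
              have hBji : B j i < 0 :=
                lt_of_le_of_ne (not_lt.mp htri) (fun h => hBij ((hsgn2 i j).mpr h))
              have hA : 0 < (B i j : ℝ) := by
                exact_mod_cast (hsgn1 i j).mpr hBji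
              have hC : 0 < (B i k : ℝ) * (B k j : ℝ) := by
                have h2 : 0 < B i k * B k j :=
                  mul_pos_of_neg_of_neg (lt_of_le_of_ne hik' hik0') hkj
                exact_mod_cast h2
              rw [mul_neg, neg_nonpos]
              exact le_of_lt (mul_pos hA hC)
      · -- both fixed
        have hkj : 0 ≤ B k j := not_lt.mp (fun hlt => hjk ((hsgn1 j k).mpr hlt))
        have hik' : B i k ≤ 0 := not_lt.mp hik
        have hnum : |B i k| * B k j + B i k * |B k j| = 0 := by
          rw [abs_of_nonpos hik', abs_of_nonneg hkj]; ring
        have hent' : (mutate k B) i j = B i j := by rw [hent, hnum]; simp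
        rw [hent', hβ'neg i hik, hβ'neg j hjk]
        exact hpair i j hij

end ClusterReflection
end
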